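/- arXiv:2505.24109 — 8 statements merged into one kernel-verified Lean document; each statement's English description precedes it below -/
import Mathlib

section
/- Let f : ℝ² → ℝ be a smooth function and H ∈ ℝ a constant such that f_xx + f_yy = 2H at every point of ℝ² (i.e., the graph ℓ = f(x,y) is an entire spacelike graph of constant mean curvature H in the isotropic 3-space). If the Gaussian curvature K_f = f_xx f_yy − f_xy² is not a constant function on ℝ², then for every real number t < H² there exists a point p ∈ ℝ² with K_f(p) = t. -/
/-- Partial derivative in the first variable. -/
noncomputable def pdx (f : ℝ → ℝ → ℝ) (x y : ℝ) : ℝ := deriv (fun t => f t y) x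

/-- Partial derivative in the second variable. -/
noncomputable def pdy (f : ℝ → ℝ → ℝ) (x y : ℝ) : ℝ := deriv (fun t => f x t) y

/-- Second partial derivative f_xx. -/
noncomputable def fxx (f : ℝ → ℝ → ℝ) (x y : ℝ) : ℝ := pdx (pdx f) x y

/-- Second partial derivative f_xy (first in x, then in y). -/
noncomputable def fxy (f : ℝ → ℝ → ℝ) (x y : ℝ) : ℝ := pdy (pdx f) x y

/-- Second partial derivative f_yy. -/
noncomputable def fyy (f : ℝ → ℝ → ℝ) (x y : ℝ) : ℝ := pdy (pdy f) x y

/-- Gaussian curvature (Hessian determinant) of the graph ℓ = f(x,y) in 𝕀³. -/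
noncomputable def Kgauss (f : ℝ → ℝ → ℝ) (x y : ℝ) : ℝ :=
  fxx f x y * fyy f x y - (fxy f x y) ^ 2

open Complex Set Bornology

set_option maxHeartbeats 1000000
set_option synthInstance.maxHeartbeats 400000

/-- Liouville: bounded entire is constant. -/
lemma aux_liouville_bdd {φ : ℂ → ℂ} (hφ : Differentiable ℂ φ) (M : ℝ)
    (hb : ∀ z, ‖φ z‖ ≤ M) : ∀ z w, φ z = φ w := by
  intro z w
  apply hφ.apply_eq_apply_of_bounded
  refine isBounded_iff_forall_norm_le.2 ⟨M, ?_⟩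
  rintro x ⟨u, rfl⟩
  simpa using hb u

/-- Liouville for functions bounded away from zero. -/
lemma aux_liouville_below {φ : ℂ → ℂ} (hφ : Differentiable ℂ φ) {r : ℝ} (hr : 0 < r)
    (hb : ∀ z, r ≤ ‖φ z‖) : ∀ z w, φ z = φ w := by
  have hne : ∀ z, φ z ≠ 0 := by
    intro z h
    have := hb z
    rw [h] at this
    simp at this
    linarith
  have hinv : Differentiable ℂ (fun z => (φ z)⁻¹) := hφ.inv hne
  have h2 : ∀ z w, (φ z)⁻¹ = (φ w)⁻¹ := by
    apply aux_liouville_bdd hinv r⁻¹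
    intro z
    rw [norm_inv]
    exact inv_anti₀ hr (hb z)
  intro z w
  exact inv_injective (h2 z w)

/-- A nonconstant entire function attains every positive modulus. -/
lemma aux_abs_attains {φ : ℂ → ℂ} (hφ : Differentiable ℂ φ)
    (hnc : ¬ ∀ z, φ z = φ 0) {r : ℝ} (hr : 0 < r) : ∃ z, ‖φ z‖ = r := by
  have h1 : ∃ z1, r < ‖φ z1‖ := by
    by_contra h; push_neg at h
    exact hnc fun z => aux_liouville_bdd hφ r h z 0
  have h0 : ∃ z0, ‖φ z0‖ < r := by
    by_contra h; push_neg at h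
    exact hnc fun z => aux_liouville_below hφ hr h z 0
  obtain ⟨z1, hz1⟩ := h1
  obtain ⟨z0, hz0⟩ := h0
  have cont : ContinuousOn (fun z => ‖φ z‖) univ :=
    (continuous_norm.comp hφ.continuous).continuousOn
  have hsub := isPreconnected_univ.intermediate_value (mem_univ z0) (mem_univ z1) cont
  obtain ⟨z, -, hz⟩ := hsub ⟨le_of_lt hz0, le_of_lt hz1⟩
  exact ⟨z, hz⟩

/-- The complex function `(f_xx - H) - i f_xy` associated to the graph. -/
noncomputable def Phi (f : ℝ → ℝ → ℝ) (H : ℝ) (z : ℂ) : ℂ :=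
  Complex.equivRealProdCLM.symm (fxx f z.re z.im - H, -(fxy f z.re z.im))

theorem stmt_0 (f : ℝ → ℝ → ℝ) (H : ℝ)
    (hf : ContDiff ℝ (⊤ : ℕ∞) (Function.uncurry f))
    (hH : ∀ x y : ℝ, fxx f x y + fyy f x y = 2 * H)
    (hK : ¬ ∃ c : ℝ, ∀ x y : ℝ, Kgauss f x y = c) :
    ∀ t : ℝ, t < H ^ 2 → ∃ x y : ℝ, Kgauss f x y = t := by
  classical
  set F : ℝ × ℝ → ℝ := Function.uncurry f with hFdef
  set F' : ℝ × ℝ → (ℝ × ℝ →L[ℝ] ℝ) := fderiv ℝ F with hF'def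
  set S : ℝ × ℝ → (ℝ × ℝ →L[ℝ] ℝ × ℝ →L[ℝ] ℝ) := fderiv ℝ F' with hSdef
  set T := fderiv ℝ S with hTdef
  have hF' : ContDiff ℝ (⊤ : ℕ∞) F' := hf.fderiv_right (by simp)
  have hS : ContDiff ℝ (⊤ : ℕ∞) S := hF'.fderiv_right (by simp)
  have hT := hS.fderiv_right (m := (⊤ : ℕ∞)) (by simp)
  have dF : ∀ p, DifferentiableAt ℝ F p := fun p => (hf.differentiable (by simp)) p
  have dF' : ∀ p, DifferentiableAt ℝ F' p := fun p => (hF'.differentiable (by simp)) p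
  have dS : ∀ p, DifferentiableAt ℝ S p := fun p => (hS.differentiable (by simp)) p
  -- slicing lemmas
  have keyx : ∀ (g : ℝ × ℝ → ℝ), Differentiable ℝ g → ∀ x y : ℝ,
      deriv (fun t => g (t, y)) x = fderiv ℝ g (x, y) (1, 0) := by
    intro g hg x y
    have h1 : HasDerivAt (fun t : ℝ => (t, y)) ((1 : ℝ), (0 : ℝ)) x :=
      (hasDerivAt_id x).prodMk (hasDerivAt_const x y)
    exact ((hg (x, y)).hasFDerivAt.comp_hasDerivAt x h1).deriv
  have keyy : ∀ (g : ℝ × ℝ → ℝ), Differentiable ℝ g → ∀ x y : ℝ,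
      deriv (fun t => g (x, t)) y = fderiv ℝ g (x, y) (0, 1) := by
    intro g hg x y
    have h1 : HasDerivAt (fun t : ℝ => (x, t)) ((0 : ℝ), (1 : ℝ)) y :=
      (hasDerivAt_const y x).prodMk (hasDerivAt_id y)
    exact ((hg (x, y)).hasFDerivAt.comp_hasDerivAt y h1).deriv
  -- first partials
  have pdx_eq : ∀ x y : ℝ, pdx f x y = F' (x, y) (1, 0) := by
    intro x y
    exact keyx F (hf.differentiable (by simp)) x y
  have pdy_eq : ∀ x y : ℝ, pdy f x y = F' (x, y) (0, 1) := by
    intro x y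
    exact keyy F (hf.differentiable (by simp)) x y
  -- second-order smoothness of slices
  have hG : ∀ v : ℝ × ℝ, Differentiable ℝ (fun p => F' p v) :=
    fun v => (hF'.clm_apply contDiff_const).differentiable (by simp)
  have dG : ∀ (v : ℝ × ℝ) (p w : ℝ × ℝ), fderiv ℝ (fun q => F' q v) p w = S p w v := by
    intro v p w
    rw [fderiv_clm_apply (dF' p) (differentiableAt_const v)]
    simp
    rfl
  -- second partials
  have fxx_eq : ∀ x y : ℝ, fxx f x y = S (x, y) (1, 0) (1, 0) := by
    intro x y
    have h1 : (fun t => pdx f t y) = fun t => F' (t, y) (1, 0) :=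
      funext fun t => pdx_eq t y
    show deriv (fun t => pdx f t y) x = _
    rw [h1, keyx _ (hG (1, 0)) x y, dG]
  have fxy_eq : ∀ x y : ℝ, fxy f x y = S (x, y) (0, 1) (1, 0) := by
    intro x y
    have h1 : (fun t => pdx f x t) = fun t => F' (x, t) (1, 0) :=
      funext fun t => pdx_eq x t
    show deriv (fun t => pdx f x t) y = _
    rw [h1, keyy _ (hG (1, 0)) x y, dG]
  have fyy_eq : ∀ x y : ℝ, fyy f x y = S (x, y) (0, 1) (0, 1) := by
    intro x y
    have h1 : (fun t => pdy f x t) = fun t => F' (x, t) (0, 1) :=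
      funext fun t => pdy_eq x t
    show deriv (fun t => pdy f x t) y = _
    rw [h1, keyy _ (hG (0, 1)) x y, dG]
  -- third-order slices
  have hSv : ∀ v : ℝ × ℝ, ContDiff ℝ (⊤ : ℕ∞) (fun p => S p v) :=
    fun v => hS.clm_apply contDiff_const
  have dSapp : ∀ v w : ℝ × ℝ, Differentiable ℝ (fun q => S q v w) :=
    fun v w => ((hSv v).clm_apply contDiff_const).differentiable (by simp)
  have dSvw : ∀ (v w p u : ℝ × ℝ), fderiv ℝ (fun q => S q v w) p u = T p u v w := by
    intro v w p u
    have h1 : fderiv ℝ (fun q => S q v) p = (S p).comp (0 : ℝ × ℝ →L[ℝ] ℝ × ℝ)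
        + (T p).flip v := by
      rw [fderiv_clm_apply (dS p) (differentiableAt_const v)]
      simp
      exact (zero_add _).symm
    rw [fderiv_clm_apply (((hSv v).differentiable (by simp)) p) (differentiableAt_const w), h1]
    simp
  -- symmetry of second derivative
  have Ssymm : ∀ (p v w : ℝ × ℝ), S p v w = S p w v := fun p v w =>
    second_derivative_symmetric (fun q => (dF q).hasFDerivAt) (dF' p).hasFDerivAt v w
  -- symmetry of the third derivative in the first two slots
  have Tsymm12 : ∀ (p u v : ℝ × ℝ), T p u v = T p v u := fun p u v =>
    second_derivative_symmetric (fun q => (dF' q).hasFDerivAt) (dS p).hasFDerivAt u v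
  -- symmetry in the last two slots
  have Tsymm23 : ∀ (p u v w : ℝ × ℝ), T p u v w = T p u w v := by
    intro p u v w
    have h1 : (fun q => S q v w) = fun q => S q w v := funext fun q => Ssymm q v w
    calc T p u v w = fderiv ℝ (fun q => S q v w) p u := (dSvw v w p u).symm
      _ = fderiv ℝ (fun q => S q w v) p u := by rw [h1]
      _ = T p u w v := dSvw w v p u
  -- the PDE in terms of S
  have hPDE : ∀ q : ℝ × ℝ, S q (1, 0) (1, 0) + S q (0, 1) (0, 1) = 2 * H := by
    intro q
    have h := hH q.1 q.2
    rw [fxx_eq q.1 q.2, fyy_eq q.1 q.2] at h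
    simpa using h
  -- derivative of the PDE
  have hPDE3 : ∀ p u : ℝ × ℝ, T p u (1, 0) (1, 0) + T p u (0, 1) (0, 1) = 0 := by
    intro p u
    have hfun : (fun q : ℝ × ℝ => S q ((1 : ℝ), (0 : ℝ)) ((1 : ℝ), (0 : ℝ))
        + S q ((0 : ℝ), (1 : ℝ)) ((0 : ℝ), (1 : ℝ))) = fun _ => 2 * H := funext hPDE
    have h1 : fderiv ℝ (fun q : ℝ × ℝ => S q ((1 : ℝ), (0 : ℝ)) ((1 : ℝ), (0 : ℝ))
        + S q ((0 : ℝ), (1 : ℝ)) ((0 : ℝ), (1 : ℝ))) p u = 0 := by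
      rw [hfun, fderiv_fun_const]
      simp
    rw [fderiv_fun_add ((dSapp _ _) p) ((dSapp _ _) p)] at h1
    simp only [ContinuousLinearMap.add_apply] at h1
    rw [dSvw, dSvw] at h1
    exact h1
  -- Phi is entire
  have hPhi_diff : Differentiable ℂ (Phi f H) := by
    intro z
    set p : ℝ × ℝ := (z.re, z.im) with hp
    set t111 := T p (1, 0) (1, 0) (1, 0) with ht111
    set t121 := T p (1, 0) (0, 1) (1, 0) with ht121
    set w : ℂ := Complex.equivRealProdCLM.symm (t111, -t121) with hw
    -- real derivative of the pair map
    have hP : HasFDerivAt (fun q : ℝ × ℝ => S q ((1:ℝ), (0:ℝ)) ((1:ℝ), (0:ℝ)) - H)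
        (fderiv ℝ (fun q : ℝ × ℝ => S q ((1:ℝ), (0:ℝ)) ((1:ℝ), (0:ℝ))) p) p :=
      ((dSapp _ _ p).hasFDerivAt).sub_const H
    have hQ : HasFDerivAt (fun q : ℝ × ℝ => -(S q ((0:ℝ), (1:ℝ)) ((1:ℝ), (0:ℝ))))
        (-(fderiv ℝ (fun q : ℝ × ℝ => S q ((0:ℝ), (1:ℝ)) ((1:ℝ), (0:ℝ))) p)) p :=
      ((dSapp _ _ p).hasFDerivAt).neg
    have hE : HasFDerivAt (fun z : ℂ => ((z.re, z.im) : ℝ × ℝ))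
        (Complex.equivRealProdCLM : ℂ →L[ℝ] ℝ × ℝ) z :=
      (Complex.equivRealProdCLM : ℂ →L[ℝ] ℝ × ℝ).hasFDerivAt
    have hPe := hP.comp z hE
    have hQe := hQ.comp z hE
    have hpair := hPe.prodMk hQe
    have hcomp := (Complex.equivRealProdCLM.symm : ℝ × ℝ →L[ℝ] ℂ).hasFDerivAt.comp z hpair
    -- hcomp : HasFDerivAt (fun z => equivRealProdCLM.symm (P (e z), Q (e z))) L z
    have hcomp := hcomp.congr_of_eventuallyEq (Filter.Eventually.of_forall
      (fun u : ℂ => by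
        show Phi f H u = _
        rw [Phi, fxx_eq, fxy_eq]
        rfl))
    -- now upgrade to complex differentiability
    have hlin : (ContinuousLinearMap.smulRight (1 : ℂ →L[ℂ] ℂ) w).restrictScalars ℝ
        = ((Complex.equivRealProdCLM.symm : ℝ × ℝ →L[ℝ] ℂ).comp
            (((fderiv ℝ (fun q : ℝ × ℝ => S q ((1:ℝ), (0:ℝ)) ((1:ℝ), (0:ℝ))) p).comp
                (Complex.equivRealProdCLM : ℂ →L[ℝ] ℝ × ℝ)).prod
              ((-(fderiv ℝ (fun q : ℝ × ℝ => S q ((0:ℝ), (1:ℝ)) ((1:ℝ), (0:ℝ))) p)).comp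
                (Complex.equivRealProdCLM : ℂ →L[ℝ] ℝ × ℝ)))) := by
      apply ContinuousLinearMap.ext
      intro u
      have hdec : ∀ M : ℝ × ℝ →L[ℝ] ℝ, M (u.re, u.im)
          = u.re * M (1, 0) + u.im * M (0, 1) := by
        intro M
        have : ((u.re, u.im) : ℝ × ℝ)
            = u.re • ((1:ℝ), (0:ℝ)) + u.im • ((0:ℝ), (1:ℝ)) := by
          simp [Prod.ext_iff]
        rw [this, map_add, map_smul, map_smul, smul_eq_mul, smul_eq_mul]
      simp only [ContinuousLinearMap.coe_comp', Function.comp_apply,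
        ContinuousLinearMap.prod_apply, ContinuousLinearMap.neg_apply,
        ContinuousLinearMap.coe_restrictScalars', ContinuousLinearMap.smulRight_apply,
        ContinuousLinearMap.one_apply]
      have hEu : (Complex.equivRealProdCLM : ℂ →L[ℝ] ℝ × ℝ) u = (u.re, u.im) := rfl
      rw [hEu, hdec, hdec, dSvw, dSvw, dSvw, dSvw]
      -- identities among third derivatives
      have e211 : T p (0, 1) (1, 0) (1, 0) = t121 := by
        rw [ht121, Tsymm12]
      have e221 : T p (0, 1) (0, 1) (1, 0) = -t111 := by
        have h1 := hPDE3 p ((1 : ℝ), (0 : ℝ))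
        have h2 : T p (1, 0) (0, 1) (0, 1) = T p (0, 1) (0, 1) (1, 0) := by
          rw [Tsymm12, Tsymm23]
        rw [h2] at h1
        rw [ht111]
        linarith
      rw [e211, e221, ← ht111, ← ht121, hw]
      rw [Complex.equivRealProdCLM_symm_apply]
      apply Complex.ext
      · simp [Complex.add_re, Complex.mul_re]
        try ring
      · simp [Complex.add_im, Complex.mul_im]
        try ring
    have : HasFDerivAt (Phi f H) (ContinuousLinearMap.smulRight (1 : ℂ →L[ℂ] ℂ) w) z :=
      hasFDerivAt_of_restrictScalars ℝ hcomp hlin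
    exact this.differentiableAt
  -- relation between Kgauss and Phi
  have hKPhi : ∀ z : ℂ, Kgauss f z.re z.im = H ^ 2 - Complex.normSq (Phi f H z) := by
    intro z
    have hre : (Phi f H z).re = fxx f z.re z.im - H := by
      rw [Phi, Complex.equivRealProdCLM_symm_apply]
      simp
    have him : (Phi f H z).im = -(fxy f z.re z.im) := by
      rw [Phi, Complex.equivRealProdCLM_symm_apply]
      simp
    have hyy : fyy f z.re z.im = 2 * H - fxx f z.re z.im := by
      have := hH z.re z.im
      linarith
    rw [Complex.normSq_apply, hre, him, Kgauss, hyy]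
    ring
  -- Phi is not constant
  have hPhi_nc : ¬ ∀ z, Phi f H z = Phi f H 0 := by
    intro hc
    apply hK
    refine ⟨H ^ 2 - Complex.normSq (Phi f H 0), fun x y => ?_⟩
    have hz : ((x : ℂ) + (y : ℂ) * Complex.I).re = x ∧
        ((x : ℂ) + (y : ℂ) * Complex.I).im = y := by
      constructor <;> simp
    have := hKPhi ((x : ℂ) + (y : ℂ) * Complex.I)
    rw [hz.1, hz.2] at this
    rw [this, hc]
  -- conclusion
  intro t ht
  have hrpos : 0 < Real.sqrt (H ^ 2 - t) := Real.sqrt_pos.2 (by linarith)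
  obtain ⟨z, hz⟩ := aux_abs_attains hPhi_diff hPhi_nc hrpos
  refine ⟨z.re, z.im, ?_⟩
  rw [hKPhi z]
  have h1 : Complex.normSq (Phi f H z) = H ^ 2 - t := by
    rw [← Complex.sq_norm, hz, Real.sq_sqrt (by linarith : (0:ℝ) ≤ H ^ 2 - t)]
  rw [h1]
  ring
end

section
/- Let f : ℝ² → ℝ be a smooth function and H, K ∈ ℝ constants such that f_xx + f_yy = 2H and f_xx f_yy − f_xy² = K at every point of ℝ². Then K ≤ H², and there exist real numbers θ, a, b, c such that for all (x,y) ∈ ℝ², f(x cos θ − y sin θ, x sin θ + y cos θ) = H·(x² + y²)/2 + √(H² − K)·(x² − y²)/2 + a·x + b·y + c. (Every constant mean curvature surface in 𝕀³ with constant Gaussian curvature is, up to an isometry of 𝕀³, part of the graph ℓ = H(x²+y²)/2 + √(H²−K)(x²−y²)/2.) -/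
private lemma clm_ext_pr {M : Type*} [NormedAddCommGroup M] [NormedSpace ℝ M]
    (L : ℝ × ℝ →L[ℝ] M) (h1 : L (1,0) = 0) (h2 : L (0,1) = 0) : L = 0 := by
  refine ContinuousLinearMap.ext fun v => ?_
  have hv : v = v.1 • ((1:ℝ),(0:ℝ)) + v.2 • ((0:ℝ),(1:ℝ)) := by
    simp [Prod.ext_iff]
  rw [hv, map_add, map_smul, map_smul, h1, h2]
  simp

private lemma clm2_ext (L M : (ℝ × ℝ) →L[ℝ] ((ℝ × ℝ) →L[ℝ] ℝ))
    (h11 : L (1,0) (1,0) = M (1,0) (1,0)) (h12 : L (1,0) (0,1) = M (1,0) (0,1))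
    (h21 : L (0,1) (1,0) = M (0,1) (1,0)) (h22 : L (0,1) (0,1) = M (0,1) (0,1)) :
    L = M := by
  refine ContinuousLinearMap.ext fun v => ContinuousLinearMap.ext fun w => ?_
  have hv : v = v.1 • ((1:ℝ),(0:ℝ)) + v.2 • ((0:ℝ),(1:ℝ)) := by simp [Prod.ext_iff]
  have hw : w = w.1 • ((1:ℝ),(0:ℝ)) + w.2 • ((0:ℝ),(1:ℝ)) := by simp [Prod.ext_iff]
  rw [hv, hw]
  simp only [map_add, map_smul, ContinuousLinearMap.add_apply, ContinuousLinearMap.coe_smul',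
    Pi.smul_apply, smul_eq_mul]
  rw [h11, h12, h21, h22]

set_option maxHeartbeats 4000000 in
set_option synthInstance.maxHeartbeats 200000 in
theorem stmt_1 (f : ℝ → ℝ → ℝ) (H K : ℝ)
    (hf : ContDiff ℝ (⊤ : ℕ∞) (Function.uncurry f))
    (hH : ∀ x y : ℝ, fxx f x y + fyy f x y = 2 * H)
    (hK : ∀ x y : ℝ, Kgauss f x y = K) :
    K ≤ H ^ 2 ∧
    ∃ θ a b c : ℝ, ∀ x y : ℝ,
      f (x * Real.cos θ - y * Real.sin θ) (x * Real.sin θ + y * Real.cos θ) =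
        H * (x ^ 2 + y ^ 2) / 2 + Real.sqrt (H ^ 2 - K) * (x ^ 2 - y ^ 2) / 2
          + a * x + b * y + c := by
  classical
  set F : ℝ × ℝ → ℝ := Function.uncurry f with hFdef
  set f' : ℝ × ℝ → (ℝ × ℝ) →L[ℝ] ℝ := fderiv ℝ F with hf'def
  have hf'c : ContDiff ℝ (⊤ : ℕ∞) f' := hf.fderiv_right (by simp)
  have hf' : ∀ p, HasFDerivAt F (f' p) p := fun p => (hf.differentiable (by simp) p).hasFDerivAt
  set S : ℝ × ℝ → (ℝ × ℝ) →L[ℝ] (ℝ × ℝ) →L[ℝ] ℝ := fderiv ℝ f' with hSdef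
  have hSc : ContDiff ℝ (⊤ : ℕ∞) S := hf'c.fderiv_right (by simp)
  have hS : ∀ p, HasFDerivAt f' (S p) p := fun p => (hf'c.differentiable (by simp) p).hasFDerivAt
  set T : ℝ × ℝ → (ℝ × ℝ) →L[ℝ] (ℝ × ℝ) →L[ℝ] (ℝ × ℝ) →L[ℝ] ℝ := fderiv ℝ S with hTdef
  have hT : ∀ p, HasFDerivAt S (T p) p := fun p => (hSc.differentiable (by simp) p).hasFDerivAt
  have hcurve1 : ∀ (y x : ℝ), HasDerivAt (fun t : ℝ => (t, y)) ((1:ℝ), (0:ℝ)) x := fun y x =>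
    (hasDerivAt_id x).prodMk (hasDerivAt_const x y)
  have hcurve2 : ∀ (x y : ℝ), HasDerivAt (fun t : ℝ => (x, t)) ((0:ℝ), (1:ℝ)) y := fun x y =>
    (hasDerivAt_const y x).prodMk (hasDerivAt_id y)
  have hpdx : ∀ x y, pdx f x y = f' (x, y) (1, 0) := by
    intro x y
    exact ((hf' (x, y)).comp_hasDerivAt x (hcurve1 y x)).deriv
  have hpdy : ∀ x y, pdy f x y = f' (x, y) (0, 1) := by
    intro x y
    exact ((hf' (x, y)).comp_hasDerivAt y (hcurve2 x y)).deriv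
  have hev1 : ∀ (w p : ℝ × ℝ), HasFDerivAt (fun q => f' q w)
      ((ContinuousLinearMap.apply ℝ ℝ w).comp (S p)) p := fun w p =>
    (ContinuousLinearMap.apply ℝ ℝ w).hasFDerivAt.comp p (hS p)
  have hfxx : ∀ x y, fxx f x y = S (x, y) (1,0) (1,0) := by
    intro x y
    have hrw : (fun t => pdx f t y) = fun t => f' (t, y) (1,0) := funext fun t => hpdx t y
    have h := (hev1 ((1:ℝ),(0:ℝ)) (x,y)).comp_hasDerivAt x (hcurve1 y x)
    have h2 : fxx f x y = ((ContinuousLinearMap.apply ℝ ℝ ((1:ℝ),(0:ℝ))).comp (S (x,y))) (1,0) := by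
      show deriv (fun t => pdx f t y) x = _
      rw [hrw]; exact h.deriv
    simpa using h2
  have hfxy : ∀ x y, fxy f x y = S (x, y) (0,1) (1,0) := by
    intro x y
    have hrw : (fun t => pdx f x t) = fun t => f' (x, t) (1,0) := funext fun t => hpdx x t
    have h := (hev1 ((1:ℝ),(0:ℝ)) (x,y)).comp_hasDerivAt y (hcurve2 x y)
    have h2 : fxy f x y = ((ContinuousLinearMap.apply ℝ ℝ ((1:ℝ),(0:ℝ))).comp (S (x,y))) (0,1) := by
      show deriv (fun t => pdx f x t) y = _
      rw [hrw]; exact h.deriv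
    simpa using h2
  have hfyy : ∀ x y, fyy f x y = S (x, y) (0,1) (0,1) := by
    intro x y
    have hrw : (fun t => pdy f x t) = fun t => f' (x, t) (0,1) := funext fun t => hpdy x t
    have h := (hev1 ((0:ℝ),(1:ℝ)) (x,y)).comp_hasDerivAt y (hcurve2 x y)
    have h2 : fyy f x y = ((ContinuousLinearMap.apply ℝ ℝ ((0:ℝ),(1:ℝ))).comp (S (x,y))) (0,1) := by
      show deriv (fun t => pdy f x t) y = _
      rw [hrw]; exact h.deriv
    simpa using h2
  have hsymm : ∀ (p v w : ℝ × ℝ), S p v w = S p w v := fun p v w =>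
    second_derivative_symmetric hf' (hS p) v w
  have hTsymm : ∀ (p v w : ℝ × ℝ), T p v w = T p w v := fun p v w =>
    second_derivative_symmetric hS (hT p) v w
  have hHc : ∀ p : ℝ × ℝ, S p (1,0) (1,0) + S p (0,1) (0,1) = 2 * H := by
    intro p
    have h := hH p.1 p.2
    rw [hfxx, hfyy] at h
    simpa using h
  have hKc : ∀ p : ℝ × ℝ, S p (1,0) (1,0) * S p (0,1) (0,1)
      - S p (0,1) (1,0) * S p (0,1) (1,0) = K := by
    intro p
    have h := hK p.1 p.2
    simp only [Kgauss] at h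
    rw [hfxx, hfyy, hfxy] at h
    rw [pow_two] at h
    simpa using h
  have hev2 : ∀ (w u p : ℝ × ℝ), HasFDerivAt (fun q => S q w u)
      ((ContinuousLinearMap.apply ℝ ℝ u).comp
        ((ContinuousLinearMap.apply ℝ ((ℝ × ℝ) →L[ℝ] ℝ) w).comp (T p))) p := by
    intro w u p
    have hmid : HasFDerivAt (fun q => S q w)
        ((ContinuousLinearMap.apply ℝ ((ℝ × ℝ) →L[ℝ] ℝ) w).comp (T p)) p := by
      have h := HasFDerivAt.comp (g := ⇑(ContinuousLinearMap.apply ℝ ((ℝ × ℝ) →L[ℝ] ℝ) w)) p (ContinuousLinearMap.hasFDerivAt _) (hT p)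
      exact h
    have hcomp : HasFDerivAt ((ContinuousLinearMap.apply ℝ ℝ u) ∘ (fun q => S q w))
        ((ContinuousLinearMap.apply ℝ ℝ u).comp
          ((ContinuousLinearMap.apply ℝ ((ℝ × ℝ) →L[ℝ] ℝ) w).comp (T p))) p :=
      (ContinuousLinearMap.apply ℝ ℝ u).hasFDerivAt.comp p hmid
    exact hcomp
  have hTlast : ∀ (p v w u : ℝ × ℝ), T p v w u = T p v u w := by
    intro p v w u
    have h2 : HasFDerivAt (fun q => S q w u)
        ((ContinuousLinearMap.apply ℝ ℝ w).comp
          ((ContinuousLinearMap.apply ℝ ((ℝ × ℝ) →L[ℝ] ℝ) u).comp (T p))) p := by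
      have hfun : (fun q => S q w u) = (fun q => S q u w) := funext fun q => hsymm q w u
      rw [hfun]; exact hev2 u w p
    have h3 := (hev2 w u p).unique h2
    have h4 := congrArg (fun (L : (ℝ × ℝ) →L[ℝ] ℝ) => L v) h3
    simpa using h4
  have hA : ∀ (p v : ℝ × ℝ), T p v (1,0) (1,0) + T p v (0,1) (0,1) = 0 := by
    intro p v
    have h1 := (hev2 ((1:ℝ),(0:ℝ)) ((1:ℝ),(0:ℝ)) p).add (hev2 ((0:ℝ),(1:ℝ)) ((0:ℝ),(1:ℝ)) p)
    have h2 : HasFDerivAt (fun q : ℝ × ℝ => S q (1,0) (1,0) + S q (0,1) (0,1)) (0 : (ℝ × ℝ) →L[ℝ] ℝ) p := by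
      have hfun : (fun q : ℝ × ℝ => S q (1,0) (1,0) + S q (0,1) (0,1)) = fun _ => 2*H :=
        funext hHc
      rw [hfun]; exact hasFDerivAt_const _ _
    have h3 := h1.unique h2
    have h4 := congrArg (fun (L : (ℝ × ℝ) →L[ℝ] ℝ) => L v) h3
    simpa using h4
  have hB : ∀ (p v : ℝ × ℝ), S p (1,0) (1,0) * T p v (0,1) (0,1)
      + S p (0,1) (0,1) * T p v (1,0) (1,0)
      - 2 * S p (0,1) (1,0) * T p v (0,1) (1,0) = 0 := by
    intro p v
    have h1 := ((hev2 ((1:ℝ),(0:ℝ)) ((1:ℝ),(0:ℝ)) p).mul (hev2 ((0:ℝ),(1:ℝ)) ((0:ℝ),(1:ℝ)) p)).sub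
      ((hev2 ((0:ℝ),(1:ℝ)) ((1:ℝ),(0:ℝ)) p).mul (hev2 ((0:ℝ),(1:ℝ)) ((1:ℝ),(0:ℝ)) p))
    have h2 : HasFDerivAt (fun q : ℝ × ℝ => S q (1,0) (1,0) * S q (0,1) (0,1)
        - S q (0,1) (1,0) * S q (0,1) (1,0)) (0 : (ℝ × ℝ) →L[ℝ] ℝ) p := by
      have hfun : (fun q : ℝ × ℝ => S q (1,0) (1,0) * S q (0,1) (0,1)
          - S q (0,1) (1,0) * S q (0,1) (1,0)) = fun _ => K := funext hKc
      rw [hfun]; exact hasFDerivAt_const _ _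
    have h3 := h1.unique h2
    have h4 := congrArg (fun (L : (ℝ × ℝ) →L[ℝ] ℝ) => L v) h3
    simp only [ContinuousLinearMap.add_apply, ContinuousLinearMap.sub_apply,
      ContinuousLinearMap.smul_apply, ContinuousLinearMap.coe_comp', Function.comp_apply,
      ContinuousLinearMap.apply_apply, smul_eq_mul, ContinuousLinearMap.zero_apply] at h4
    linarith
  have hgh_sq : ∀ p : ℝ × ℝ, ((S p (1,0) (1,0) - S p (0,1) (0,1))/2)^2 + (S p (0,1) (1,0))^2
      = H^2 - K := by
    intro p
    have h1 := hHc p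
    have h2 := hKc p
    linear_combination ((S p (1,0) (1,0) + S p (0,1) (0,1) + 2*H)/4) * h1 - h2
  have hKle : K ≤ H ^ 2 := by
    have h := hgh_sq ((0:ℝ),(0:ℝ))
    nlinarith [sq_nonneg ((S ((0:ℝ),(0:ℝ)) (1,0) (1,0) - S ((0:ℝ),(0:ℝ)) (0,1) (0,1))/2),
      sq_nonneg (S ((0:ℝ),(0:ℝ)) (0,1) (1,0))]
  have hScomp : ∀ p : ℝ × ℝ, S p (1,0) (1,0) = S ((0:ℝ),(0:ℝ)) (1,0) (1,0)
      ∧ S p (0,1) (1,0) = S ((0:ℝ),(0:ℝ)) (0,1) (1,0)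
      ∧ S p (0,1) (0,1) = S ((0:ℝ),(0:ℝ)) (0,1) (0,1) := by
    by_cases hcase : H ^ 2 - K = 0
    · have hpt : ∀ p : ℝ × ℝ, S p (1,0) (1,0) = H ∧ S p (0,1) (1,0) = 0
          ∧ S p (0,1) (0,1) = H := by
        intro p
        have h1 := hHc p
        have h2 := hgh_sq p
        rw [hcase] at h2
        refine ⟨?_, ?_, ?_⟩
        · nlinarith [sq_nonneg (S p (0,1) (1,0))]
        · nlinarith [sq_nonneg ((S p (1,0) (1,0) - S p (0,1) (0,1))/2)]
        · nlinarith [sq_nonneg (S p (0,1) (1,0))]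
      intro p
      obtain ⟨a1,b1,c1⟩ := hpt p
      obtain ⟨a2,b2,c2⟩ := hpt ((0:ℝ),(0:ℝ))
      exact ⟨by rw [a1,a2], by rw [b1,b2], by rw [c1,c2]⟩
    · have hzero : ∀ (p v w u : ℝ × ℝ), (v = ((1:ℝ),(0:ℝ)) ∨ v = ((0:ℝ),(1:ℝ))) →
          (w = ((1:ℝ),(0:ℝ)) ∨ w = ((0:ℝ),(1:ℝ))) →
          (u = ((1:ℝ),(0:ℝ)) ∨ u = ((0:ℝ),(1:ℝ))) → T p v w u = 0 := by
        intro p v w u hv hw hu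
        have e122 : T p (1,0) (0,1) (0,1) = - T p (1,0) (1,0) (1,0) := by
          have h := hA p ((1:ℝ),(0:ℝ)); linarith
        have e211 : T p (0,1) (1,0) (1,0) = T p (1,0) (1,0) (0,1) := by
          have h := congrArg (fun (L : (ℝ × ℝ) →L[ℝ] ℝ) => L ((1:ℝ),(0:ℝ)))
            (hTsymm p ((0:ℝ),(1:ℝ)) ((1:ℝ),(0:ℝ)))
          rw [h, hTlast]
        have e212 : T p (0,1) (1,0) (0,1) = - T p (1,0) (1,0) (1,0) := by
          have h := congrArg (fun (L : (ℝ × ℝ) →L[ℝ] ℝ) => L ((0:ℝ),(1:ℝ)))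
            (hTsymm p ((0:ℝ),(1:ℝ)) ((1:ℝ),(0:ℝ)))
          rw [h]; exact e122
        have e221 : T p (0,1) (0,1) (1,0) = - T p (1,0) (1,0) (1,0) := by
          rw [hTlast p ((0:ℝ),(1:ℝ)) ((0:ℝ),(1:ℝ)) ((1:ℝ),(0:ℝ))]; exact e212
        have e222 : T p (0,1) (0,1) (0,1) = - T p (1,0) (1,0) (0,1) := by
          have h := hA p ((0:ℝ),(1:ℝ)); rw [e211] at h; linarith
        have hb1 := hB p ((1:ℝ),(0:ℝ))
        have hb2 := hB p ((0:ℝ),(1:ℝ))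
        rw [e122, hTlast p ((1:ℝ),(0:ℝ)) ((0:ℝ),(1:ℝ)) ((1:ℝ),(0:ℝ))] at hb1
        rw [e222, e211, e221] at hb2
        have hne : (((S p (1,0) (1,0) - S p (0,1) (0,1))/2)^2 + (S p (0,1) (1,0))^2) ≠ 0 := by
          rw [hgh_sq p]; exact hcase
        have hmul1 : (((S p (1,0) (1,0) - S p (0,1) (0,1))/2)^2 + (S p (0,1) (1,0))^2)
            * T p (1,0) (1,0) (1,0) = 0 := by
          linear_combination ((S p (0,1) (0,1) - S p (1,0) (1,0))/4) * hb1
            + (S p (0,1) (1,0)/2) * hb2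
        have hmul2 : (((S p (1,0) (1,0) - S p (0,1) (0,1))/2)^2 + (S p (0,1) (1,0))^2)
            * T p (1,0) (1,0) (0,1) = 0 := by
          linear_combination (-(S p (0,1) (1,0))/2) * hb1
            + ((S p (0,1) (0,1) - S p (1,0) (1,0))/4) * hb2
        have z111 : T p (1,0) (1,0) (1,0) = 0 := (mul_eq_zero.1 hmul1).resolve_left hne
        have z112 : T p (1,0) (1,0) (0,1) = 0 := (mul_eq_zero.1 hmul2).resolve_left hne
        have z121 : T p (1,0) (0,1) (1,0) = 0 := by
          rw [hTlast p ((1:ℝ),(0:ℝ)) ((0:ℝ),(1:ℝ)) ((1:ℝ),(0:ℝ))]; exact z112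
        have z122 : T p (1,0) (0,1) (0,1) = 0 := by rw [e122, z111]; ring
        have z211 : T p (0,1) (1,0) (1,0) = 0 := by rw [e211]; exact z112
        have z212 : T p (0,1) (1,0) (0,1) = 0 := by rw [e212, z111]; ring
        have z221 : T p (0,1) (0,1) (1,0) = 0 := by rw [e221, z111]; ring
        have z222 : T p (0,1) (0,1) (0,1) = 0 := by rw [e222, z112]; ring
        rcases hv with rfl|rfl <;> rcases hw with rfl|rfl <;> rcases hu with rfl|rfl <;>
          assumption
      have hconst : ∀ (w u : ℝ × ℝ), (w = ((1:ℝ),(0:ℝ)) ∨ w = ((0:ℝ),(1:ℝ))) →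
          (u = ((1:ℝ),(0:ℝ)) ∨ u = ((0:ℝ),(1:ℝ))) →
          ∀ p : ℝ × ℝ, S p w u = S ((0:ℝ),(0:ℝ)) w u := by
        intro w u hw hu p
        refine is_const_of_fderiv_eq_zero (𝕜 := ℝ) (fun r => (hev2 w u r).differentiableAt)
          ?_ p _
        intro q
        rw [(hev2 w u q).fderiv]
        refine clm_ext_pr _ ?_ ?_
        · have hval : ((ContinuousLinearMap.apply ℝ ℝ u).comp
              ((ContinuousLinearMap.apply ℝ ((ℝ × ℝ) →L[ℝ] ℝ) w).comp (T q))) ((1:ℝ),(0:ℝ))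
              = T q (1,0) w u := by simp
          rw [hval]; exact hzero q _ w u (Or.inl rfl) hw hu
        · have hval : ((ContinuousLinearMap.apply ℝ ℝ u).comp
              ((ContinuousLinearMap.apply ℝ ((ℝ × ℝ) →L[ℝ] ℝ) w).comp (T q))) ((0:ℝ),(1:ℝ))
              = T q (0,1) w u := by simp
          rw [hval]; exact hzero q _ w u (Or.inr rfl) hw hu
      intro p
      exact ⟨hconst _ _ (Or.inl rfl) (Or.inl rfl) p, hconst _ _ (Or.inr rfl) (Or.inl rfl) p,
        hconst _ _ (Or.inr rfl) (Or.inr rfl) p⟩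
  have hS12 : ∀ p : ℝ × ℝ, S p (1,0) (0,1) = S ((0:ℝ),(0:ℝ)) (1,0) (0,1) := by
    intro p
    rw [hsymm p ((1:ℝ),(0:ℝ)) ((0:ℝ),(1:ℝ)), (hScomp p).2.1,
      hsymm ((0:ℝ),(0:ℝ)) ((0:ℝ),(1:ℝ)) ((1:ℝ),(0:ℝ))]
  have hS0 : ∀ p : ℝ × ℝ, S p = S ((0:ℝ),(0:ℝ)) := fun p =>
    clm2_ext _ _ (hScomp p).1 (hS12 p) (hScomp p).2.1 (hScomp p).2.2
  have hf'aff : ∀ p : ℝ × ℝ, f' p = f' ((0:ℝ),(0:ℝ)) + S ((0:ℝ),(0:ℝ)) p := by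
    have hφ : ∀ p : ℝ × ℝ, HasFDerivAt (fun q : ℝ × ℝ => f' q - S ((0:ℝ),(0:ℝ)) q)
        (0 : (ℝ × ℝ) →L[ℝ] (ℝ × ℝ) →L[ℝ] ℝ) p := by
      intro p
      have h := (hS p).sub ((S ((0:ℝ),(0:ℝ))).hasFDerivAt (x := p))
      rwa [hS0 p, sub_self] at h
    have hc := is_const_of_fderiv_eq_zero (𝕜 := ℝ) (fun p => (hφ p).differentiableAt)
      (fun p => (hφ p).fderiv)
    intro p
    have h := hc p ((0:ℝ),(0:ℝ))
    have h0 : S ((0:ℝ),(0:ℝ)) ((0:ℝ),(0:ℝ)) = 0 := map_zero _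
    rw [h0, sub_zero] at h
    exact sub_eq_iff_eq_add.1 h
  have hquadD : ∀ p : ℝ × ℝ, HasFDerivAt (fun q : ℝ × ℝ => S ((0:ℝ),(0:ℝ)) q q)
      ((S ((0:ℝ),(0:ℝ)) p).comp (ContinuousLinearMap.id ℝ (ℝ × ℝ))
        + (S ((0:ℝ),(0:ℝ))).flip p) p := by
    intro p
    have h := ((S ((0:ℝ),(0:ℝ))).hasFDerivAt (x := p)).clm_apply (hasFDerivAt_id p)
    exact h
  have hψ : ∀ p : ℝ × ℝ, HasFDerivAt
      (fun q : ℝ × ℝ => F q - f' ((0:ℝ),(0:ℝ)) q - 2⁻¹ * S ((0:ℝ),(0:ℝ)) q q)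
      (0 : (ℝ × ℝ) →L[ℝ] ℝ) p := by
    intro p
    have h := ((hf' p).sub ((f' ((0:ℝ),(0:ℝ))).hasFDerivAt (x := p))).sub
      ((hquadD p).const_mul 2⁻¹)
    have hz : f' p - f' ((0:ℝ),(0:ℝ))
        - (2:ℝ)⁻¹ • ((S ((0:ℝ),(0:ℝ)) p).comp (ContinuousLinearMap.id ℝ (ℝ × ℝ))
          + (S ((0:ℝ),(0:ℝ))).flip p) = 0 := by
      refine ContinuousLinearMap.ext fun v => ?_
      have h1 := congrArg (fun (L : (ℝ × ℝ) →L[ℝ] ℝ) => L v) (hf'aff p)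
      simp only [ContinuousLinearMap.add_apply] at h1
      simp only [ContinuousLinearMap.sub_apply, ContinuousLinearMap.smul_apply,
        ContinuousLinearMap.add_apply, ContinuousLinearMap.coe_comp', Function.comp_apply,
        ContinuousLinearMap.coe_id', id_eq, ContinuousLinearMap.flip_apply,
        ContinuousLinearMap.zero_apply, smul_eq_mul]
      rw [hsymm ((0:ℝ),(0:ℝ)) v p, h1]
      ring
    rwa [hz] at h
  have hFeq : ∀ u v : ℝ, F (u, v) = F ((0:ℝ),(0:ℝ)) + f' ((0:ℝ),(0:ℝ)) (u, v)
      + 2⁻¹ * S ((0:ℝ),(0:ℝ)) (u,v) (u,v) := by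
    have hc := is_const_of_fderiv_eq_zero (𝕜 := ℝ) (fun p => (hψ p).differentiableAt)
      (fun p => (hψ p).fderiv)
    intro u v
    have h := hc (u,v) ((0:ℝ),(0:ℝ))
    have h01 : f' ((0:ℝ),(0:ℝ)) ((0:ℝ),(0:ℝ)) = 0 := map_zero _
    have h02 : S ((0:ℝ),(0:ℝ)) ((0:ℝ),(0:ℝ)) ((0:ℝ),(0:ℝ)) = 0 := by
      have hz00 : ((0:ℝ),(0:ℝ)) = (0 : ℝ × ℝ) := rfl
      rw [hz00, map_zero]


    rw [h01, h02, sub_zero] at h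
    have h3 : (2:ℝ)⁻¹ * 0 = 0 := by ring
    rw [h3, sub_zero] at h
    linarith [h]
  have hlin : ∀ u v : ℝ, f' ((0:ℝ),(0:ℝ)) (u, v)
      = u * f' ((0:ℝ),(0:ℝ)) (1,0) + v * f' ((0:ℝ),(0:ℝ)) (0,1) := by
    intro u v
    have huv : (u, v) = u • ((1:ℝ),(0:ℝ)) + v • ((0:ℝ),(1:ℝ)) := by simp [Prod.ext_iff]
    rw [huv, map_add, map_smul, map_smul, smul_eq_mul, smul_eq_mul]
  have hquadv : ∀ u v : ℝ, S ((0:ℝ),(0:ℝ)) (u,v) (u,v)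
      = u^2 * S ((0:ℝ),(0:ℝ)) (1,0) (1,0) + 2*(u*v) * S ((0:ℝ),(0:ℝ)) (0,1) (1,0)
        + v^2 * S ((0:ℝ),(0:ℝ)) (0,1) (0,1) := by
    intro u v
    have huv : (u, v) = u • ((1:ℝ),(0:ℝ)) + v • ((0:ℝ),(1:ℝ)) := by simp [Prod.ext_iff]
    rw [huv]
    simp only [map_add, map_smul, ContinuousLinearMap.add_apply, ContinuousLinearMap.coe_smul',
      Pi.smul_apply, smul_eq_mul]
    rw [hsymm ((0:ℝ),(0:ℝ)) ((1:ℝ),(0:ℝ)) ((0:ℝ),(1:ℝ))]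
    ring
  have hsum : S ((0:ℝ),(0:ℝ)) (1,0) (1,0) + S ((0:ℝ),(0:ℝ)) (0,1) (0,1) = 2*H := hHc _
  set r := Real.sqrt (H^2 - K) with hrdef
  have hr2 : r^2 = H^2 - K := Real.sq_sqrt (by linarith)
  have hrnn : (0:ℝ) ≤ r := Real.sqrt_nonneg _
  have hghr : ((S ((0:ℝ),(0:ℝ)) (1,0) (1,0) - S ((0:ℝ),(0:ℝ)) (0,1) (0,1))/2)^2
      + (S ((0:ℝ),(0:ℝ)) (0,1) (1,0))^2 = r^2 := by rw [hr2]; exact hgh_sq _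
  obtain ⟨θ, hg, hh⟩ : ∃ θ : ℝ,
      (S ((0:ℝ),(0:ℝ)) (1,0) (1,0) - S ((0:ℝ),(0:ℝ)) (0,1) (0,1))/2
        = r * (Real.cos θ^2 - Real.sin θ^2)
      ∧ S ((0:ℝ),(0:ℝ)) (0,1) (1,0) = 2 * r * Real.sin θ * Real.cos θ := by
    by_cases hr0 : r = 0
    · have h := hghr
      rw [hr0] at h
      have h1 : (S ((0:ℝ),(0:ℝ)) (1,0) (1,0) - S ((0:ℝ),(0:ℝ)) (0,1) (0,1))/2 = 0 := by
        nlinarith [sq_nonneg ((S ((0:ℝ),(0:ℝ)) (1,0) (1,0) - S ((0:ℝ),(0:ℝ)) (0,1) (0,1))/2),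
          sq_nonneg (S ((0:ℝ),(0:ℝ)) (0,1) (1,0))]
      have h2 : S ((0:ℝ),(0:ℝ)) (0,1) (1,0) = 0 := by
        nlinarith [sq_nonneg ((S ((0:ℝ),(0:ℝ)) (1,0) (1,0) - S ((0:ℝ),(0:ℝ)) (0,1) (0,1))/2),
          sq_nonneg (S ((0:ℝ),(0:ℝ)) (0,1) (1,0))]
      exact ⟨0, by rw [h1, hr0]; ring, by rw [h2, hr0]; ring⟩
    · set z : ℂ := ⟨(S ((0:ℝ),(0:ℝ)) (1,0) (1,0) - S ((0:ℝ),(0:ℝ)) (0,1) (0,1))/2,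
        S ((0:ℝ),(0:ℝ)) (0,1) (1,0)⟩ with hzdef
      have hre : z.re = (S ((0:ℝ),(0:ℝ)) (1,0) (1,0) - S ((0:ℝ),(0:ℝ)) (0,1) (0,1))/2 := rfl
      have him : z.im = S ((0:ℝ),(0:ℝ)) (0,1) (1,0) := rfl
      have habs : ‖z‖ = r := by
        rw [Complex.norm_def]
        have hns : Complex.normSq z = r^2 := by
          rw [Complex.normSq_apply, hre, him]; nlinarith [hghr]
        rw [hns]
        exact Real.sqrt_sq hrnn
      have hz0 : z ≠ 0 := by
        intro hzz
        rw [hzz] at habs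
        simp at habs
        exact hr0 habs.symm
      have harg : 2 * (z.arg/2) = z.arg := by ring
      have hc2 := Real.cos_two_mul (z.arg/2)
      rw [harg] at hc2
      have hs2 := Real.sin_two_mul (z.arg/2)
      rw [harg] at hs2
      have hpy2 := Real.sin_sq_add_cos_sq (z.arg/2)
      have hcc := Complex.cos_arg hz0
      rw [habs, hre] at hcc
      have hss := Complex.sin_arg z
      rw [habs, him] at hss
      refine ⟨z.arg / 2, ?_, ?_⟩
      · have hdb : Real.cos (z.arg/2)^2 - Real.sin (z.arg/2)^2 = Real.cos z.arg := by
          linarith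
        rw [hdb, hcc]
        field_simp
      · have hdb : 2 * r * Real.sin (z.arg/2) * Real.cos (z.arg/2) = r * Real.sin z.arg := by
          rw [hs2]; ring
        rw [hdb, hss]
        field_simp
  refine ⟨hKle, θ, Real.cos θ * f' ((0:ℝ),(0:ℝ)) (1,0) + Real.sin θ * f' ((0:ℝ),(0:ℝ)) (0,1),
    -Real.sin θ * f' ((0:ℝ),(0:ℝ)) (1,0) + Real.cos θ * f' ((0:ℝ),(0:ℝ)) (0,1),
    F ((0:ℝ),(0:ℝ)), ?_⟩
  intro x y
  have hxy := hFeq (x * Real.cos θ - y * Real.sin θ) (x * Real.sin θ + y * Real.cos θ)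
  rw [hlin, hquadv] at hxy
  have hfF : f (x * Real.cos θ - y * Real.sin θ) (x * Real.sin θ + y * Real.cos θ)
      = F (x * Real.cos θ - y * Real.sin θ, x * Real.sin θ + y * Real.cos θ) := rfl
  rw [hfF, hxy]
  have hpy := Real.sin_sq_add_cos_sq θ
  linear_combination (((x * Real.cos θ - y * Real.sin θ)^2 + (x * Real.sin θ + y * Real.cos θ)^2)/4) * hsum
    + (((x * Real.cos θ - y * Real.sin θ)^2 - (x * Real.sin θ + y * Real.cos θ)^2)/2) * hg
    + ((x * Real.cos θ - y * Real.sin θ) * (x * Real.sin θ + y * Real.cos θ)) * hh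
    + (H*(x^2+y^2)/2 + r*(x^2-y^2)*(Real.cos θ^2 + Real.sin θ^2 + 1)/2) * hpy
end

section
/- Let f : ℝ² → ℝ be a smooth harmonic function (f_xx + f_yy = 0 everywhere), so that the graph ℓ = f(x,y) is an entire zero mean curvature graph in 𝕀³. If the Gaussian curvature K_f = f_xx f_yy − f_xy² is bounded below on ℝ², then K_f is a constant K ≤ 0, and there exist real numbers θ, a, b, c such that for all (x,y), f(x cos θ − y sin θ, x sin θ + y cos θ) = √(−K)·(x² − y²)/2 + a·x + b·y + c; that is, the surface is a plane (K = 0) or a rectangular hyperbolic paraboloid of curvature K (K < 0). -/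
section AuxLemmas

open Function

lemma aux_hasDerivAt_x (G : ℝ × ℝ → ℝ) (hG : Differentiable ℝ G) (x y : ℝ) :
    HasDerivAt (fun t => G (t, y)) (fderiv ℝ G (x, y) (1, 0)) x := by
  have h1 : HasDerivAt (fun t : ℝ => ((t, y) : ℝ × ℝ)) ((1 : ℝ), (0 : ℝ)) x :=
    (hasDerivAt_id x).prodMk (hasDerivAt_const x y)
  exact (hG (x, y)).hasFDerivAt.comp_hasDerivAt x h1

lemma aux_hasDerivAt_y (G : ℝ × ℝ → ℝ) (hG : Differentiable ℝ G) (x y : ℝ) :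
    HasDerivAt (fun t => G (x, t)) (fderiv ℝ G (x, y) (0, 1)) y := by
  have h1 : HasDerivAt (fun t : ℝ => ((x, t) : ℝ × ℝ)) ((0 : ℝ), (1 : ℝ)) y :=
    (hasDerivAt_const y x).prodMk (hasDerivAt_id y)
  exact (hG (x, y)).hasFDerivAt.comp_hasDerivAt y h1

lemma pdx_eq (f : ℝ → ℝ → ℝ) (hf : Differentiable ℝ (uncurry f)) (x y : ℝ) :
    pdx f x y = fderiv ℝ (uncurry f) (x, y) (1, 0) :=
  (aux_hasDerivAt_x (uncurry f) hf x y).deriv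

lemma pdy_eq (f : ℝ → ℝ → ℝ) (hf : Differentiable ℝ (uncurry f)) (x y : ℝ) :
    pdy f x y = fderiv ℝ (uncurry f) (x, y) (0, 1) :=
  (aux_hasDerivAt_y (uncurry f) hf x y).deriv

lemma clm_decomp (L : ℝ × ℝ →L[ℝ] ℝ) (u v : ℝ) : L (u, v) = u * L (1, 0) + v * L (0, 1) := by
  have h : ((u, v) : ℝ × ℝ) = u • ((1 : ℝ), (0 : ℝ)) + v • ((0 : ℝ), (1 : ℝ)) := by
    simp [Prod.ext_iff]
  rw [h, map_add, map_smul, map_smul, smul_eq_mul, smul_eq_mul]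

/-- Cauchy–Riemann: a pair of real functions satisfying CR equations gives a
complex differentiable function. -/
lemma aux_CR (g1 g2 : ℝ × ℝ → ℝ) (hg1 : Differentiable ℝ g1) (hg2 : Differentiable ℝ g2) (z : ℂ)
    (A B : ℝ)
    (h10 : fderiv ℝ g1 (z.re, z.im) (1, 0) = A)
    (h01 : fderiv ℝ g1 (z.re, z.im) (0, 1) = B)
    (h20 : fderiv ℝ g2 (z.re, z.im) (1, 0) = B)
    (h02 : fderiv ℝ g2 (z.re, z.im) (0, 1) = -A) :
    HasDerivAt (fun w : ℂ => Complex.equivRealProdCLM.symm (g1 (w.re, w.im), -(g2 (w.re, w.im))))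
      (Complex.equivRealProdCLM.symm (A, -B)) z := by
  set P : ℝ × ℝ := (z.re, z.im) with hP
  have hG : HasFDerivAt (fun p : ℝ × ℝ => (g1 p, -(g2 p)))
      ((fderiv ℝ g1 P).prod (-(fderiv ℝ g2 P))) P :=
    (hg1 P).hasFDerivAt.prodMk ((hg2 P).hasFDerivAt.neg)
  have hπ : HasFDerivAt (fun w : ℂ => ((w.re, w.im) : ℝ × ℝ))
      (Complex.equivRealProdCLM : ℂ →L[ℝ] ℝ × ℝ) z := Complex.equivRealProdCLM.hasFDerivAt
  have hσ : HasFDerivAt (fun p : ℝ × ℝ => Complex.equivRealProdCLM.symm p)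
      (Complex.equivRealProdCLM.symm : ℝ × ℝ →L[ℝ] ℂ) (g1 P, -(g2 P)) :=
    Complex.equivRealProdCLM.symm.hasFDerivAt
  have hh : HasFDerivAt
      (fun w : ℂ => Complex.equivRealProdCLM.symm (g1 (w.re, w.im), -(g2 (w.re, w.im))))
      ((Complex.equivRealProdCLM.symm : ℝ × ℝ →L[ℝ] ℂ).comp
        (((fderiv ℝ g1 P).prod (-(fderiv ℝ g2 P))).comp
          (Complex.equivRealProdCLM : ℂ →L[ℝ] ℝ × ℝ))) z :=
    hσ.comp z (hG.comp z hπ)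
  rw [hasDerivAt_iff_hasFDerivAt]
  have hLeq : (ContinuousLinearMap.smulRight (1 : ℂ →L[ℂ] ℂ)
          (Complex.equivRealProdCLM.symm (A, -B))).restrictScalars ℝ
      = ((Complex.equivRealProdCLM.symm : ℝ × ℝ →L[ℝ] ℂ).comp
        (((fderiv ℝ g1 P).prod (-(fderiv ℝ g2 P))).comp
          (Complex.equivRealProdCLM : ℂ →L[ℝ] ℝ × ℝ))) := by
    apply ContinuousLinearMap.ext
    intro w
    have d1 : fderiv ℝ g1 P (w.re, w.im) = w.re * A + w.im * B := by
      have h : ((w.re, w.im) : ℝ × ℝ) = w.re • ((1:ℝ), (0:ℝ)) + w.im • ((0:ℝ), (1:ℝ)) := by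
        simp [Prod.ext_iff]
      rw [h, map_add, map_smul, map_smul, h10, h01, smul_eq_mul, smul_eq_mul]
    have d2 : fderiv ℝ g2 P (w.re, w.im) = w.re * B + w.im * (-A) := by
      have h : ((w.re, w.im) : ℝ × ℝ) = w.re • ((1:ℝ), (0:ℝ)) + w.im • ((0:ℝ), (1:ℝ)) := by
        simp [Prod.ext_iff]
      rw [h, map_add, map_smul, map_smul, h20, h02, smul_eq_mul, smul_eq_mul]
    simp only [ContinuousLinearMap.coe_comp', Function.comp_apply,
      ContinuousLinearMap.coe_restrictScalars', ContinuousLinearMap.smulRight_apply,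
      ContinuousLinearMap.one_apply, ContinuousLinearMap.prod_apply,
      ContinuousLinearMap.neg_apply, Complex.equivRealProdCLM_symm_apply,
      ContinuousLinearEquiv.coe_coe]
    have hπw : (Complex.equivRealProdCLM w : ℝ × ℝ) = (w.re, w.im) := rfl
    rw [hπw, d1, d2]
    apply Complex.ext <;>
      simp [Complex.add_re, Complex.add_im, Complex.mul_re, Complex.mul_im] <;> ring
  exact hasFDerivAt_of_restrictScalars ℝ hh hLeq

lemma aux_liouville (w : ℂ → ℂ) (hw : Differentiable ℂ w) (C : ℝ)
    (hb : ∀ z, Complex.normSq (w z) ≤ C) (z : ℂ) : w z = w 0 := by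
  apply hw.apply_eq_apply_of_bounded
  rw [isBounded_iff_forall_norm_le]
  refine ⟨Real.sqrt C, ?_⟩
  rintro - ⟨z', rfl⟩
  rw [Complex.norm_def]
  exact Real.sqrt_le_sqrt (hb z')

lemma aux_trig (p q : ℝ) : ∃ θ : ℝ,
    p = Real.sqrt (p^2 + q^2) * (Real.cos θ ^ 2 - Real.sin θ ^ 2) ∧
    q = Real.sqrt (p^2 + q^2) * (2 * Real.sin θ * Real.cos θ) := by
  set r := Real.sqrt (p^2 + q^2) with hr
  set w : ℂ := ⟨p, q⟩ with hw
  have habs : ‖w‖ = r := by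
    rw [Complex.norm_def, Complex.normSq_mk, hr]
    ring_nf
  set θ := Complex.arg w / 2 with hθ
  have hcos2 : Real.cos θ ^ 2 - Real.sin θ ^ 2 = Real.cos (Complex.arg w) := by
    rw [show Complex.arg w = 2 * θ by rw [hθ]; ring, Real.cos_two_mul]
    have := Real.sin_sq_add_cos_sq θ
    linarith
  have hsin2 : 2 * Real.sin θ * Real.cos θ = Real.sin (Complex.arg w) := by
    rw [show Complex.arg w = 2 * θ by rw [hθ]; ring, Real.sin_two_mul]
  refine ⟨θ, ?_, ?_⟩
  · rw [hcos2]
    by_cases hw0 : w = 0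
    · have hp : p = 0 := by simpa [Complex.ext_iff] using congrArg Complex.re hw0
      have hq : q = 0 := by simpa [Complex.ext_iff] using congrArg Complex.im hw0
      simp [hp, hq, hr]
    · have hr0 : r ≠ 0 := by rw [← habs]; simpa using hw0
      rw [Complex.cos_arg hw0, habs]
      have h : w.re = p := rfl
      rw [h]
      field_simp
  · rw [hsin2]
    by_cases hw0 : w = 0
    · have hp : p = 0 := by simpa [Complex.ext_iff] using congrArg Complex.re hw0
      have hq : q = 0 := by simpa [Complex.ext_iff] using congrArg Complex.im hw0
      simp [hp, hq, hr]
    · have hr0 : r ≠ 0 := by rw [← habs]; simpa using hw0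
      rw [Complex.sin_arg, habs]
      have h : w.im = q := rfl
      rw [h]
      field_simp

end AuxLemmas

theorem stmt_2 (f : ℝ → ℝ → ℝ)
    (hf : ContDiff ℝ (⊤ : ℕ∞) (Function.uncurry f))
    (hH : ∀ x y : ℝ, fxx f x y + fyy f x y = 0)
    (hbdd : ∃ C : ℝ, ∀ x y : ℝ, C ≤ Kgauss f x y) :
    ∃ K : ℝ, K ≤ 0 ∧ (∀ x y : ℝ, Kgauss f x y = K) ∧
      ∃ θ a b c : ℝ, ∀ x y : ℝ,
        f (x * Real.cos θ - y * Real.sin θ) (x * Real.sin θ + y * Real.cos θ) =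
          Real.sqrt (-K) * (x ^ 2 - y ^ 2) / 2 + a * x + b * y + c := by
  classical
  obtain ⟨C, hC⟩ := hbdd
  have hFd : Differentiable ℝ (Function.uncurry f) := hf.differentiable (by simp)
  have hf' : ContDiff ℝ (⊤ : ℕ∞) (fderiv ℝ (Function.uncurry f)) := hf.fderiv_right (by simp)
  set F := Function.uncurry f with hF
  set g1 : ℝ × ℝ → ℝ := fun p => fderiv ℝ F p (1, 0) with hg1def
  set g2 : ℝ × ℝ → ℝ := fun p => fderiv ℝ F p (0, 1) with hg2def
  have hg1 : ContDiff ℝ (⊤ : ℕ∞) g1 := hf'.clm_apply contDiff_const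
  have hg2 : ContDiff ℝ (⊤ : ℕ∞) g2 := hf'.clm_apply contDiff_const
  have hg1d : Differentiable ℝ g1 := hg1.differentiable (by simp)
  have hg2d : Differentiable ℝ g2 := hg2.differentiable (by simp)
  have hg1u : Function.uncurry (pdx f) = g1 := by
    funext P
    exact (pdx_eq f hFd P.1 P.2).trans (by rw [Prod.mk.eta])
  have hg2u : Function.uncurry (pdy f) = g2 := by
    funext P
    exact (pdy_eq f hFd P.1 P.2).trans (by rw [Prod.mk.eta])
  have hpdx : ∀ x y, pdx f x y = g1 (x, y) := fun x y => pdx_eq f hFd x y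
  have hpdy : ∀ x y, pdy f x y = g2 (x, y) := fun x y => pdy_eq f hFd x y
  -- second partial derivatives
  have hfxx : ∀ x y, fxx f x y = fderiv ℝ g1 (x, y) (1, 0) := by
    intro x y
    rw [show fxx f x y = pdx (pdx f) x y from rfl,
      pdx_eq (pdx f) (hg1u ▸ hg1d) x y, hg1u]
  have hfxy : ∀ x y, fxy f x y = fderiv ℝ g1 (x, y) (0, 1) := by
    intro x y
    rw [show fxy f x y = pdy (pdx f) x y from rfl,
      pdy_eq (pdx f) (hg1u ▸ hg1d) x y, hg1u]
  have hfyy : ∀ x y, fyy f x y = fderiv ℝ g2 (x, y) (0, 1) := by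
    intro x y
    rw [show fyy f x y = pdy (pdy f) x y from rfl,
      pdy_eq (pdy f) (hg2u ▸ hg2d) x y, hg2u]
  -- symmetry of second derivatives
  have hsymm : ∀ (P v w : ℝ × ℝ),
      fderiv ℝ (fderiv ℝ F) P v w = fderiv ℝ (fderiv ℝ F) P w v := fun P v w =>
    second_derivative_symmetric (fun y => (hFd y).hasFDerivAt)
      ((hf'.differentiable (by simp) P).hasFDerivAt) v w
  have hkey : ∀ (v P w : ℝ × ℝ),
      fderiv ℝ (fun p => fderiv ℝ F p v) P w = fderiv ℝ (fderiv ℝ F) P w v := by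
    intro v P w
    rw [show (fun p => fderiv ℝ F p v) = fun p => (fderiv ℝ F p) ((fun _ => v) p) from rfl,
      fderiv_clm_apply (hf'.differentiable (by simp) P) (differentiableAt_const v)]
    simp
  have hg2_10 : ∀ x y, fderiv ℝ g2 (x, y) (1, 0) = fxy f x y := by
    intro x y
    rw [hfxy x y, hg1def, hg2def, hkey, hkey, hsymm]
  -- Kgauss in terms of fxx, fxy
  have hyyxx : ∀ x y, fyy f x y = -(fxx f x y) := fun x y => by linarith [hH x y]
  have hKval : ∀ x y, Kgauss f x y = -((fxx f x y)^2 + (fxy f x y)^2) := by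
    intro x y
    rw [Kgauss, hyyxx x y]
    ring
  -- the complex derivative function
  set h : ℂ → ℂ :=
    fun z => Complex.equivRealProdCLM.symm (g1 (z.re, z.im), -(g2 (z.re, z.im))) with hhdef
  set w : ℂ → ℂ :=
    fun z => Complex.equivRealProdCLM.symm (fxx f z.re z.im, -(fxy f z.re z.im)) with hwdef
  have hder : ∀ z, HasDerivAt h (w z) z := by
    intro z
    apply aux_CR g1 g2 hg1d hg2d z (fxx f z.re z.im) (fxy f z.re z.im)
    · exact (hfxx z.re z.im).symm
    · exact (hfxy z.re z.im).symm
    · exact hg2_10 z.re z.im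
    · rw [← hyyxx z.re z.im]
      exact (hfyy z.re z.im).symm
  have hdiff : Differentiable ℂ h := fun z => (hder z).differentiableAt
  have hwdiff : Differentiable ℂ w := by
    have heq : w = fun z => (fderiv ℂ h z) ((fun _ : ℂ => (1 : ℂ)) z) := by
      funext z
      rw [(hder z).hasFDerivAt.fderiv]
      simp
    rw [heq]
    exact Differentiable.clm_apply (fun z => ((hdiff.analyticAt z).fderiv).differentiableAt)
      (differentiable_const 1)
  -- boundedness of w
  have hre : ∀ u v : ℝ, (Complex.equivRealProdCLM.symm (u, v) : ℂ).re = u := by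
    intro u v
    simp [Complex.equivRealProdCLM_symm_apply]
  have him : ∀ u v : ℝ, (Complex.equivRealProdCLM.symm (u, v) : ℂ).im = v := by
    intro u v
    simp [Complex.equivRealProdCLM_symm_apply]
  have hb2 : ∀ z, Complex.normSq (w z) ≤ -C := by
    intro z
    have h1 : Complex.normSq (w z)
        = (fxx f z.re z.im)^2 + (fxy f z.re z.im)^2 := by
      rw [hwdef]
      rw [Complex.normSq_apply, hre, him]
      ring
    have h2 := hC z.re z.im
    rw [hKval z.re z.im] at h2
    linarith [h1]
  have hwconst : ∀ z, w z = w 0 := aux_liouville w hwdiff (-C) hb2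
  set p := fxx f 0 0 with hpdef
  set q := fxy f 0 0 with hqdef
  have hpq : ∀ x y, fxx f x y = p ∧ fxy f x y = q := by
    intro x y
    have h1 := hwconst ⟨x, y⟩
    rw [hwdef] at h1
    simp only [] at h1
    have h2 := Complex.equivRealProdCLM.symm.injective h1
    rw [Prod.ext_iff] at h2
    obtain ⟨h3, h4⟩ := h2
    constructor
    · exact h3
    · exact neg_injective h4
  refine ⟨-(p^2 + q^2), neg_nonpos.mpr (by positivity), ?_, ?_⟩
  · intro x y
    rw [hKval x y, (hpq x y).1, (hpq x y).2]
  -- h is affine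
  set w0 : ℂ := Complex.equivRealProdCLM.symm (p, -q) with hw0def
  have hder0 : ∀ z, HasDerivAt h w0 z := by
    intro z
    have hwz : w z = w0 := by
      simp only [hwdef]
      rw [(hpq z.re z.im).1, (hpq z.re z.im).2, hw0def]
    rw [← hwz]
    exact hder z
  have hd2 : ∀ z : ℂ, HasDerivAt (fun z => h z - w0 * z) 0 z := by
    intro z
    have := (hder0 z).sub ((hasDerivAt_id z).const_mul w0)
    exact this.congr_deriv (by simp)
  have hlin : ∀ z, h z = w0 * z + h 0 := by
    intro z
    have hc := is_const_of_fderiv_eq_zero (𝕜 := ℂ)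
      (fun z => (hd2 z).differentiableAt)
      (fun x => by rw [(hd2 x).hasFDerivAt.fderiv]; ext v; simp) z 0
    calc h z = (h z - w0 * z) + w0 * z := by ring
    _ = (h 0 - w0 * 0) + w0 * z := by rw [hc]
    _ = w0 * z + h 0 := by ring
  set a := (h 0).re with hadef
  set b := -((h 0).im) with hbdef
  have hw0re : w0.re = p := hre p (-q)
  have hw0im : w0.im = -q := him p (-q)
  have hpdx' : ∀ x y, g1 (x, y) = p * x + q * y + a := by
    intro x y
    have hz := congrArg Complex.re (hlin ⟨x, y⟩)
    have e1 : (h (⟨x, y⟩ : ℂ)).re = g1 (x, y) := by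
      rw [hhdef]
      exact hre _ _
    rw [e1] at hz
    rw [Complex.add_re, Complex.mul_re] at hz
    have e2 : (⟨x, y⟩ : ℂ).re = x := rfl
    have e3 : (⟨x, y⟩ : ℂ).im = y := rfl
    rw [e2, e3, hw0re, hw0im] at hz
    rw [hz, hadef]
    ring
  have hpdy' : ∀ x y, g2 (x, y) = q * x - p * y + b := by
    intro x y
    have hz := congrArg Complex.im (hlin ⟨x, y⟩)
    have e1 : (h (⟨x, y⟩ : ℂ)).im = -(g2 (x, y)) := by
      rw [hhdef]
      exact him _ _
    rw [e1] at hz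
    rw [Complex.add_im, Complex.mul_im] at hz
    have e2 : (⟨x, y⟩ : ℂ).re = x := rfl
    have e3 : (⟨x, y⟩ : ℂ).im = y := rfl
    rw [e2, e3, hw0re, hw0im] at hz
    rw [hbdef]
    linarith [hz]
  -- the explicit polynomial form of f
  set Pc : ℝ × ℝ → ℝ :=
    fun pt => p * (pt.1^2 - pt.2^2)/2 + (q*pt.1*pt.2 + (a*pt.1 + b*pt.2)) with hPcdef
  have hPcd : Differentiable ℝ Pc := by
    rw [hPcdef]
    fun_prop
  have hPcx : ∀ x y, HasDerivAt (fun t => Pc (t, y)) (p*x + q*y + a) x := by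
    intro x y
    have h1 : HasDerivAt (fun t : ℝ => t^2) (2*x) x := by simpa using hasDerivAt_pow 2 x
    have h2 := ((h1.sub_const (y^2)).const_mul p).div_const 2
    have h3 := ((hasDerivAt_id x).const_mul q).mul_const y
    have h4 := ((hasDerivAt_id x).const_mul a).add_const (b*y)
    have h6 := h2.add (h3.add h4)
    exact h6.congr_deriv (by ring)
  have hPcy : ∀ x y, HasDerivAt (fun t => Pc (x, t)) (q*x - p*y + b) y := by
    intro x y
    have h1 : HasDerivAt (fun t : ℝ => t^2) (2*y) y := by simpa using hasDerivAt_pow 2 y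
    have h2 := ((h1.const_sub (x^2)).const_mul p).div_const 2
    have h3 := (hasDerivAt_id y).const_mul (q*x)
    have h4 := ((hasDerivAt_id y).const_mul b).const_add (a*x)
    have h6 := h2.add (h3.add h4)
    exact h6.congr_deriv (by ring)
  set phi : ℝ × ℝ → ℝ := fun pt => F pt - Pc pt with hphidef
  have hphid : Differentiable ℝ phi := hFd.sub hPcd
  have hphix : ∀ x y, fderiv ℝ phi (x, y) (1, 0) = 0 := by
    intro x y
    have H1 := aux_hasDerivAt_x phi hphid x y
    have H2 := (aux_hasDerivAt_x F hFd x y).sub (hPcx x y)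
    have h3 := H1.unique H2
    rw [h3, show fderiv ℝ F (x, y) (1, 0) = g1 (x, y) from rfl, hpdx' x y]
    ring
  have hphiy : ∀ x y, fderiv ℝ phi (x, y) (0, 1) = 0 := by
    intro x y
    have H1 := aux_hasDerivAt_y phi hphid x y
    have H2 := (aux_hasDerivAt_y F hFd x y).sub (hPcy x y)
    have h3 := H1.unique H2
    rw [h3, show fderiv ℝ F (x, y) (0, 1) = g2 (x, y) from rfl, hpdy' x y]
    ring
  have hphi0 : ∀ P : ℝ × ℝ, fderiv ℝ phi P = 0 := by
    intro P
    apply ContinuousLinearMap.ext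
    intro v
    have hd := clm_decomp (fderiv ℝ phi P) v.1 v.2
    rw [Prod.mk.eta] at hd
    have e1 := hphix P.1 P.2
    have e2 := hphiy P.1 P.2
    rw [Prod.mk.eta] at e1 e2
    rw [hd, e1, e2]
    simp
  have hfval : ∀ x y : ℝ, f x y = Pc (x, y) + f 0 0 := by
    intro x y
    have hc := is_const_of_fderiv_eq_zero hphid hphi0 (x, y) (0, 0)
    simp only [hphidef] at hc
    have hPc0 : Pc (0, 0) = 0 := by
      rw [hPcdef]
      norm_num
    rw [hPc0] at hc
    have hFxy : F (x, y) = f x y := rfl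
    have hF00 : F (0, 0) = f 0 0 := rfl
    rw [hFxy, hF00] at hc
    linarith
  -- rotation
  obtain ⟨θ, hc2, hs2⟩ := aux_trig p q
  set r := Real.sqrt (p^2 + q^2) with hrdef
  refine ⟨θ, a * Real.cos θ + b * Real.sin θ, b * Real.cos θ - a * Real.sin θ, f 0 0, ?_⟩
  intro x y
  rw [hfval]
  have hsqrt : Real.sqrt (-(-(p^2 + q^2))) = r := by rw [neg_neg]
  rw [hsqrt]
  have hcs := Real.sin_sq_add_cos_sq θ
  simp only [hPcdef]
  set c := Real.cos θ
  set s := Real.sin θ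
  linear_combination (((x*c - y*s)^2 - (x*s + y*c)^2)/2) * hc2
    + ((x*c - y*s) * (x*s + y*c)) * hs2
    + (r * (x^2 - y^2) * (c^2 + s^2 + 1) / 2) * hcs
end

section
/- Let f : ℝ² → ℝ be a smooth function and H ∈ ℝ a constant such that f_xx + f_yy = 2H everywhere. If the Hessian determinant f_xx f_yy − f_xy² is bounded on ℝ², then f is a polynomial of degree at most 2 in (x, y). -/
open Function

section Aux

variable {g : ℝ → ℝ → ℝ}

lemma diff_sliceX (hg : ContDiff ℝ (⊤ : ℕ∞) (uncurry g)) (y : ℝ) :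
    Differentiable ℝ (fun t => g t y) := fun x => by
  exact ((hg.differentiable (by simp)) (x, y)).comp x
    (DifferentiableAt.prodMk (differentiableAt_id : DifferentiableAt ℝ (fun t : ℝ => t) x) (differentiableAt_const y))

lemma diff_sliceY (hg : ContDiff ℝ (⊤ : ℕ∞) (uncurry g)) (x : ℝ) :
    Differentiable ℝ (fun t => g x t) := fun y => by
  exact ((hg.differentiable (by simp)) (x, y)).comp y
    (DifferentiableAt.prodMk (differentiableAt_const x) (differentiableAt_id : DifferentiableAt ℝ (fun t : ℝ => t) y))

lemma hasDerivAt_pdx (hg : ContDiff ℝ (⊤ : ℕ∞) (uncurry g)) (x y : ℝ) :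
    HasDerivAt (fun t => g t y) (pdx g x y) x := (diff_sliceX hg y x).hasDerivAt

lemma hasDerivAt_pdy (hg : ContDiff ℝ (⊤ : ℕ∞) (uncurry g)) (x y : ℝ) :
    HasDerivAt (fun t => g x t) (pdy g x y) y := (diff_sliceY hg x y).hasDerivAt

lemma pdx_eq_fderiv (hg : ContDiff ℝ (⊤ : ℕ∞) (uncurry g)) (x y : ℝ) :
    pdx g x y = fderiv ℝ (uncurry g) (x, y) (1, 0) := by
  have h1 : HasDerivAt (fun t : ℝ => (t, y)) ((1:ℝ), (0:ℝ)) x :=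
    HasDerivAt.prodMk (hasDerivAt_id x) (hasDerivAt_const x y)
  have h2 : HasDerivAt (fun t => g t y) (fderiv ℝ (uncurry g) (x, y) (1, 0)) x :=
    (((hg.differentiable (by simp)) (x, y)).hasFDerivAt).comp_hasDerivAt (l := uncurry g) x h1
  exact h2.deriv

lemma pdy_eq_fderiv (hg : ContDiff ℝ (⊤ : ℕ∞) (uncurry g)) (x y : ℝ) :
    pdy g x y = fderiv ℝ (uncurry g) (x, y) (0, 1) := by
  have h1 : HasDerivAt (fun t : ℝ => (x, t)) ((0:ℝ), (1:ℝ)) y :=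
    HasDerivAt.prodMk (hasDerivAt_const y x) (hasDerivAt_id y)
  have h2 : HasDerivAt (fun t => g x t) (fderiv ℝ (uncurry g) (x, y) (0, 1)) y :=
    (((hg.differentiable (by simp)) (x, y)).hasFDerivAt).comp_hasDerivAt (l := uncurry g) y h1
  exact h2.deriv

lemma uncurry_pdx_eq (hg : ContDiff ℝ (⊤ : ℕ∞) (uncurry g)) :
    uncurry (pdx g) = fun p : ℝ × ℝ => fderiv ℝ (uncurry g) p (1, 0) := by
  funext p
  obtain ⟨x, y⟩ := p
  exact pdx_eq_fderiv hg x y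

lemma uncurry_pdy_eq (hg : ContDiff ℝ (⊤ : ℕ∞) (uncurry g)) :
    uncurry (pdy g) = fun p : ℝ × ℝ => fderiv ℝ (uncurry g) p (0, 1) := by
  funext p
  obtain ⟨x, y⟩ := p
  exact pdy_eq_fderiv hg x y

lemma contDiff_pdx (hg : ContDiff ℝ (⊤ : ℕ∞) (uncurry g)) : ContDiff ℝ (⊤ : ℕ∞) (uncurry (pdx g)) := by
  rw [uncurry_pdx_eq hg]
  exact (hg.fderiv_right (by simp)).clm_apply contDiff_const

lemma contDiff_pdy (hg : ContDiff ℝ (⊤ : ℕ∞) (uncurry g)) : ContDiff ℝ (⊤ : ℕ∞) (uncurry (pdy g)) := by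
  rw [uncurry_pdy_eq hg]
  exact (hg.fderiv_right (by simp)).clm_apply contDiff_const

/-- fderiv of evaluated fderiv. -/
lemma fderiv_eval (hg : ContDiff ℝ (⊤ : ℕ∞) (uncurry g)) (v w : ℝ × ℝ) (p : ℝ × ℝ) :
    fderiv ℝ (fun q : ℝ × ℝ => fderiv ℝ (uncurry g) q v) p w
      = fderiv ℝ (fderiv ℝ (uncurry g)) p w v := by
  have hD : DifferentiableAt ℝ (fderiv ℝ (uncurry g)) p :=
    ((hg.fderiv_right (m := (⊤ : ℕ∞)) (by simp)).differentiable (by simp)) p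
  have h : HasFDerivAt (fun q : ℝ × ℝ => fderiv ℝ (uncurry g) q v)
      ((ContinuousLinearMap.apply ℝ ℝ v).comp (fderiv ℝ (fderiv ℝ (uncurry g)) p)) p :=
    ((ContinuousLinearMap.apply ℝ ℝ v).hasFDerivAt).comp p hD.hasFDerivAt
  rw [h.fderiv]
  rfl

lemma clairaut (hg : ContDiff ℝ (⊤ : ℕ∞) (uncurry g)) (x y : ℝ) :
    pdy (pdx g) x y = pdx (pdy g) x y := by
  have hsymm := second_derivative_symmetric
    (f := uncurry g) (f' := fderiv ℝ (uncurry g))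
    (fun q => ((hg.differentiable (by simp)) q).hasFDerivAt)
    ((((hg.fderiv_right (m := (⊤ : ℕ∞)) (by simp)).differentiable (by simp)) (x, y)).hasFDerivAt)
  have h1 : pdy (pdx g) x y = fderiv ℝ (fderiv ℝ (uncurry g)) (x, y) (0, 1) (1, 0) := by
    rw [pdy_eq_fderiv (contDiff_pdx hg) x y, uncurry_pdx_eq hg, fderiv_eval hg]
  have h2 : pdx (pdy g) x y = fderiv ℝ (fderiv ℝ (uncurry g)) (x, y) (1, 0) (0, 1) := by
    rw [pdx_eq_fderiv (contDiff_pdy hg) x y, uncurry_pdy_eq hg, fderiv_eval hg]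
  rw [h1, h2, hsymm]

end Aux
lemma sub_eq_of_hasDerivAt {h P p : ℝ → ℝ}
    (hh : ∀ t, HasDerivAt h (p t) t) (hP : ∀ t, HasDerivAt P (p t) t) (x : ℝ) :
    h x = h 0 + (P x - P 0) := by
  have hg : ∀ t, HasDerivAt (fun t => h t - P t) 0 t := fun t => by
    have := (hh t).sub (hP t); simp only [sub_self] at this; exact this
  have hc := is_const_of_deriv_eq_zero (f := fun t => h t - P t)
    (fun t => (hg t).differentiableAt) (fun t => (hg t).deriv) x 0
  beta_reduce at hc
  linarith

lemma integral_const {h : ℝ → ℝ} {c : ℝ} (hh : ∀ t, HasDerivAt h c t) (x : ℝ) :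
    h x = h 0 + c * x := by
  have hP : ∀ t : ℝ, HasDerivAt (fun t => c * t) c t := fun t => by
    simpa using (hasDerivAt_id t).const_mul c
  have := sub_eq_of_hasDerivAt (p := fun _ => c) hh hP x
  simpa using this

lemma integral_lin {h : ℝ → ℝ} {a b : ℝ} (hh : ∀ t, HasDerivAt h (a * t + b) t) (x : ℝ) :
    h x = h 0 + a / 2 * x ^ 2 + b * x := by
  have hP : ∀ t : ℝ, HasDerivAt (fun t => a / 2 * t ^ 2 + b * t) (a * t + b) t := by
    intro t
    have h1 : HasDerivAt (fun t : ℝ => t ^ 2) (2 * t) t := by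
      simpa using hasDerivAt_pow 2 t
    have h2 := (h1.const_mul (a / 2)).add ((hasDerivAt_id t).const_mul b)
    exact h2.congr_deriv (by ring)
  have := sub_eq_of_hasDerivAt hh hP x
  rw [this]; ring

section Core

variable {f : ℝ → ℝ → ℝ} {H : ℝ}

lemma cr_relations (hf : ContDiff ℝ (⊤ : ℕ∞) (uncurry f))
    (hH' : ∀ x y : ℝ, pdx (pdx f) x y + pdy (pdy f) x y = 2 * H) :
    (∀ x y : ℝ, pdy (pdx (pdx f)) x y = pdx (pdy (pdx f)) x y) ∧
    (∀ x y : ℝ, pdy (pdy (pdx f)) x y = - pdx (pdx (pdx f)) x y) := by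
  have hpx : ContDiff ℝ (⊤ : ℕ∞) (uncurry (pdx f)) := contDiff_pdx hf
  have hpy : ContDiff ℝ (⊤ : ℕ∞) (uncurry (pdy f)) := contDiff_pdy hf
  refine ⟨clairaut hpx, ?_⟩
  intro x y
  have e1 : pdy (pdx f) = pdx (pdy f) := by
    funext a b; exact clairaut hf a b
  have e2 : pdy (pdy f) = fun a b => 2 * H - pdx (pdx f) a b := by
    funext a b; linarith [hH' a b]
  calc pdy (pdy (pdx f)) x y = pdy (pdx (pdy f)) x y := by rw [e1]
    _ = pdx (pdy (pdy f)) x y := clairaut hpy x y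
    _ = - pdx (pdx (pdx f)) x y := by
        rw [e2]
        show deriv (fun t => 2 * H - pdx (pdx f) t y) x = _
        rw [deriv_const_sub]
        rfl

lemma second_partials_const (hf : ContDiff ℝ (⊤ : ℕ∞) (uncurry f))
    (hH' : ∀ x y : ℝ, pdx (pdx f) x y + pdy (pdy f) x y = 2 * H)
    {C : ℝ}
    (hC : ∀ x y : ℝ, |pdx (pdx f) x y * pdy (pdy f) x y - (pdy (pdx f) x y) ^ 2| ≤ C) :
    (∀ x y : ℝ, pdx (pdx f) x y = pdx (pdx f) 0 0) ∧
    (∀ x y : ℝ, pdy (pdx f) x y = pdy (pdx f) 0 0) := by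
  have hpx : ContDiff ℝ (⊤ : ℕ∞) (uncurry (pdx f)) := contDiff_pdx hf
  have hxx : ContDiff ℝ (⊤ : ℕ∞) (uncurry (pdx (pdx f))) := contDiff_pdx hpx
  have hxy : ContDiff ℝ (⊤ : ℕ∞) (uncurry (pdy (pdx f))) := contDiff_pdy hpx
  obtain ⟨cr1, cr2⟩ := cr_relations hf hH'
  set U : ℝ × ℝ → ℝ := uncurry (pdx (pdx f)) with hUdef
  set V : ℝ × ℝ → ℝ := uncurry (pdy (pdx f)) with hVdef
  set e : ℂ →L[ℝ] ℝ × ℝ := (Complex.equivRealProdCLM : ℂ →L[ℝ] ℝ × ℝ) with hedef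
  have he : ∀ z : ℂ, e z = (z.re, z.im) := fun z => rfl
  set φ : ℂ → ℂ := fun z => ((U (e z) : ℝ) : ℂ) - (H : ℂ) - Complex.I * ((V (e z) : ℝ) : ℂ)
    with hφdef
  -- φ is entire
  have hdiff : Differentiable ℂ φ := by
    intro z
    set p : ℝ × ℝ := e z with hpdef
    have hUz : HasFDerivAt (fun w : ℂ => U (e w)) ((fderiv ℝ U p).comp e) z :=
      (((hxx.differentiable (by simp)) p).hasFDerivAt).comp (g := U) z (e.hasFDerivAt)
    have hVz : HasFDerivAt (fun w : ℂ => V (e w)) ((fderiv ℝ V p).comp e) z :=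
      (((hxy.differentiable (by simp)) p).hasFDerivAt).comp (g := V) z (e.hasFDerivAt)
    have hA : HasFDerivAt (fun w : ℂ => ((U (e w) : ℝ) : ℂ))
        (Complex.ofRealCLM.comp ((fderiv ℝ U p).comp e)) z :=
      (Complex.ofRealCLM.hasFDerivAt).comp z hUz
    have hB : HasFDerivAt (fun w : ℂ => Complex.I * ((V (e w) : ℝ) : ℂ))
        (Complex.I • (Complex.ofRealCLM.comp ((fderiv ℝ V p).comp e))) z :=
      ((Complex.ofRealCLM.hasFDerivAt).comp z hVz).const_mul Complex.I
    have hφL : HasFDerivAt φ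
        ((Complex.ofRealCLM.comp ((fderiv ℝ U p).comp e)) -
          (Complex.I • (Complex.ofRealCLM.comp ((fderiv ℝ V p).comp e)))) z :=
      (hA.sub_const (H : ℂ)).sub hB
    set c : ℂ := ((pdx (pdx (pdx f)) z.re z.im : ℝ) : ℂ) -
      Complex.I * ((pdx (pdy (pdx f)) z.re z.im : ℝ) : ℂ) with hcdef
    have hext : ((c • (1 : ℂ →L[ℂ] ℂ)).restrictScalars ℝ) =
        ((Complex.ofRealCLM.comp ((fderiv ℝ U p).comp e)) -
          (Complex.I • (Complex.ofRealCLM.comp ((fderiv ℝ V p).comp e)))) := by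
      apply ContinuousLinearMap.ext
      intro w
      have hw : e w = w.re • ((1:ℝ), (0:ℝ)) + w.im • ((0:ℝ), (1:ℝ)) := by
        rw [he]; simp [Prod.ext_iff]
      have hU1 : fderiv ℝ U p (1, 0) = pdx (pdx (pdx f)) z.re z.im := by
        rw [hpdef, he]; exact (pdx_eq_fderiv hxx z.re z.im).symm
      have hU2 : fderiv ℝ U p (0, 1) = pdy (pdx (pdx f)) z.re z.im := by
        rw [hpdef, he]; exact (pdy_eq_fderiv hxx z.re z.im).symm
      have hV1 : fderiv ℝ V p (1, 0) = pdx (pdy (pdx f)) z.re z.im := by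
        rw [hpdef, he]; exact (pdx_eq_fderiv hxy z.re z.im).symm
      have hV2 : fderiv ℝ V p (0, 1) = pdy (pdy (pdx f)) z.re z.im := by
        rw [hpdef, he]; exact (pdy_eq_fderiv hxy z.re z.im).symm
      have hUw : fderiv ℝ U p (e w) =
          w.re * pdx (pdx (pdx f)) z.re z.im + w.im * pdx (pdy (pdx f)) z.re z.im := by
        rw [hw, map_add, map_smul, map_smul, hU1, hU2, cr1]
        simp [smul_eq_mul]
      have hVw : fderiv ℝ V p (e w) =
          w.re * pdx (pdy (pdx f)) z.re z.im - w.im * pdx (pdx (pdx f)) z.re z.im := by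
        rw [hw, map_add, map_smul, map_smul, hV1, hV2, cr2]
        simp [smul_eq_mul]; ring
      simp only [ContinuousLinearMap.coe_restrictScalars',
        ContinuousLinearMap.coe_sub', Pi.sub_apply, ContinuousLinearMap.coe_smul',
        Pi.smul_apply, ContinuousLinearMap.coe_comp', Function.comp_apply,
        ContinuousLinearMap.smul_apply, ContinuousLinearMap.one_apply,
        Complex.ofRealCLM_apply, hUw, hVw, hcdef, smul_eq_mul]
      apply Complex.ext <;>
        simp [Complex.mul_re, Complex.mul_im, Complex.add_re, Complex.add_im] <;> ring
    exact (hasFDerivAt_of_restrictScalars (𝕜 := ℝ) hφL hext).differentiableAt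
  -- φ is bounded
  have hbound : ∀ z : ℂ, ‖φ z‖ ≤ Real.sqrt (H ^ 2 + |C|) := by
    intro z
    have hK := hC z.re z.im
    have hsum := hH' z.re z.im
    have hsq : ‖φ z‖ ^ 2 ≤ H ^ 2 + |C| := by
      have hre : (φ z).re = U (e z) - H := by simp [hφdef]
      have him : (φ z).im = - V (e z) := by simp [hφdef]
      have hnorm : ‖φ z‖ ^ 2 = (φ z).re ^ 2 + (φ z).im ^ 2 := by
        rw [Complex.sq_norm, Complex.normSq_apply]; ring
      rw [hnorm, hre, him]
      have hUz : U (e z) = pdx (pdx f) z.re z.im := rfl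
      have hVz : V (e z) = pdy (pdx f) z.re z.im := rfl
      rw [hUz, hVz]
      have h1 : pdx (pdx f) z.re z.im * pdy (pdy f) z.re z.im -
          (pdy (pdx f) z.re z.im) ^ 2 ≥ -C := neg_le_of_abs_le hK
      have h2 : C ≤ |C| := le_abs_self C
      have hw : pdy (pdy f) z.re z.im = 2 * H - pdx (pdx f) z.re z.im := by linarith
      rw [hw] at h1
      nlinarith [sq_nonneg (pdy (pdx f) z.re z.im)]
    have := Real.sqrt_le_sqrt hsq
    rwa [Real.sqrt_sq (norm_nonneg _)] at this
  have hrange : Bornology.IsBounded (Set.range φ) := by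
    rw [isBounded_iff_forall_norm_le]
    exact ⟨Real.sqrt (H ^ 2 + |C|), by rintro _ ⟨z, rfl⟩; exact hbound z⟩
  have hconst : ∀ z : ℂ, φ z = φ 0 := fun z =>
    hdiff.apply_eq_apply_of_bounded hrange z 0
  constructor
  · intro x y
    have := hconst (Complex.mk x y)
    have hre := congrArg Complex.re this
    exact (by simpa [hφdef, he] using hre : U (x, y) = U (0, 0))
  · intro x y
    have := hconst (Complex.mk x y)
    have him := congrArg Complex.im this
    exact (by simpa [hφdef, he] using him : V (x, y) = V (0, 0))

end Core

theorem stmt_4 (f : ℝ → ℝ → ℝ) (H : ℝ)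
    (hf : ContDiff ℝ (⊤ : ℕ∞) (Function.uncurry f))
    (hH : ∀ x y : ℝ, fxx f x y + fyy f x y = 2 * H)
    (hbdd : ∃ C : ℝ, ∀ x y : ℝ, |Kgauss f x y| ≤ C) :
    ∃ a b c d e g : ℝ, ∀ x y : ℝ,
      f x y = a * x ^ 2 + b * x * y + c * y ^ 2 + d * x + e * y + g := by
  obtain ⟨C, hC⟩ := hbdd
  have hH' : ∀ x y : ℝ, pdx (pdx f) x y + pdy (pdy f) x y = 2 * H := hH
  have hC' : ∀ x y : ℝ,
      |pdx (pdx f) x y * pdy (pdy f) x y - (pdy (pdx f) x y) ^ 2| ≤ C := hC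
  obtain ⟨hAc, hBc⟩ := second_partials_const hf hH' hC'
  have hpx : ContDiff ℝ (⊤ : ℕ∞) (uncurry (pdx f)) := contDiff_pdx hf
  have hpy : ContDiff ℝ (⊤ : ℕ∞) (uncurry (pdy f)) := contDiff_pdy hf
  set A := pdx (pdx f) 0 0 with hA
  set B := pdy (pdx f) 0 0 with hB
  set d := pdx f 0 0 with hd
  set e := pdy f 0 0 with he
  -- step 1 : pdx f x y = pdx f 0 y + A x
  have s1 : ∀ y x : ℝ, pdx f x y = pdx f 0 y + A * x := by
    intro y x
    exact integral_const (fun t => by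
      have h := hasDerivAt_pdx hpx t y
      rwa [hAc t y] at h) x
  have s2 : ∀ y : ℝ, pdx f 0 y = d + B * y := by
    intro y
    have := integral_const (h := fun s => pdx f 0 s) (fun t => by
      have h := hasDerivAt_pdy hpx 0 t
      rwa [hBc 0 t] at h) y
    simpa [hd] using this
  have s3 : ∀ y x : ℝ, f x y = f 0 y + A / 2 * x ^ 2 + (B * y + d) * x := by
    intro y x
    exact integral_lin (a := A) (b := B * y + d) (fun t => by
      have h := hasDerivAt_pdx hf t y
      rw [s1 y t, s2 y] at h
      convert h using 1; ring) x
  have s4 : ∀ y : ℝ, pdy f 0 y = e + (2 * H - A) * y := by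
    intro y
    have := integral_const (h := fun s => pdy f 0 s) (fun t => by
      have h := hasDerivAt_pdy hpy 0 t
      have hval : pdy (pdy f) 0 t = 2 * H - A := by
        have := hH' 0 t
        rw [hAc 0 t] at this
        linarith
      rwa [hval] at h) y
    simpa [he] using this
  have s5 : ∀ y : ℝ, f 0 y = f 0 0 + (2 * H - A) / 2 * y ^ 2 + e * y := by
    intro y
    exact integral_lin (h := fun s => f 0 s) (a := 2 * H - A) (b := e) (fun t => by
      have h := hasDerivAt_pdy hf 0 t
      rw [s4 t] at h
      convert h using 1; ring) y
  refine ⟨A / 2, B, (2 * H - A) / 2, d, e, f 0 0, ?_⟩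
  intro x y
  rw [s3 y x, s5 y]
  ring
end

section
/- Let f : ℝ² → ℝ be a smooth function and H ∈ ℝ a constant such that f_xx + f_yy = 2H everywhere. Then the image of the Hessian determinant 𝓗_f = f_xx f_yy − f_xy² (as a function on ℝ²) is exactly one of the following: a single point, the open interval (−∞, H²), or the half-open interval (−∞, H²]. -/
lemma deriv_fst' {F : ℝ × ℝ → ℝ} (hF : Differentiable ℝ F) (x y : ℝ) :
    deriv (fun t => F (t, y)) x = fderiv ℝ F (x, y) (1, 0) := by
  have h1 : HasDerivAt (fun t : ℝ => (t, y)) ((1 : ℝ), (0 : ℝ)) x :=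
    HasDerivAt.prodMk (hasDerivAt_id x) (hasDerivAt_const x y)
  exact (((hF (x, y)).hasFDerivAt).comp_hasDerivAt x h1).deriv

lemma deriv_snd' {F : ℝ × ℝ → ℝ} (hF : Differentiable ℝ F) (x y : ℝ) :
    deriv (fun t => F (x, t)) y = fderiv ℝ F (x, y) (0, 1) := by
  have h1 : HasDerivAt (fun t : ℝ => (x, t)) ((0 : ℝ), (1 : ℝ)) y :=
    HasDerivAt.prodMk (hasDerivAt_const y x) (hasDerivAt_id y)
  exact (((hF (x, y)).hasFDerivAt).comp_hasDerivAt y h1).deriv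

lemma fderiv_clm_apply_const' {G : ℝ × ℝ → (ℝ × ℝ) →L[ℝ] ℝ} {p : ℝ × ℝ}
    (hG : DifferentiableAt ℝ G p) (v w : ℝ × ℝ) :
    fderiv ℝ (fun q => G q v) p w = fderiv ℝ G p w v := by
  have h : HasFDerivAt (fun q => G q v)
      ((ContinuousLinearMap.apply ℝ ℝ v).comp (fderiv ℝ G p)) p :=
    (ContinuousLinearMap.apply ℝ ℝ v).hasFDerivAt.comp p hG.hasFDerivAt
  rw [h.fderiv]; rfl

lemma cr_hasDerivAt {P Q : ℝ × ℝ → ℝ} {Lp Lq : (ℝ × ℝ) →L[ℝ] ℝ} {z : ℂ}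
    (hP : HasFDerivAt P Lp (z.re, z.im)) (hQ : HasFDerivAt Q Lq (z.re, z.im))
    (h1 : Lp (1, 0) = Lq (0, 1)) (h2 : Lp (0, 1) = -Lq (1, 0)) :
    HasDerivAt (fun w : ℂ => (P (w.re, w.im) : ℂ) + (Q (w.re, w.im) : ℂ) * Complex.I)
      ((Lp (1, 0) : ℂ) + (Lq (1, 0) : ℂ) * Complex.I) z := by
  have hπ : HasFDerivAt (fun w : ℂ => (w.re, w.im))
      ((Complex.reCLM.prod Complex.imCLM) : ℂ →L[ℝ] ℝ × ℝ) z :=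
    (Complex.reCLM.prod Complex.imCLM).hasFDerivAt
  have hPz := hP.comp z hπ
  have hQz := hQ.comp z hπ
  have hre := Complex.ofRealCLM.hasFDerivAt.comp z hPz
  have hQc := Complex.ofRealCLM.hasFDerivAt.comp z hQz
  have hψ := hre.add (hQc.mul_const Complex.I)
  set c : ℂ := (Lp (1, 0) : ℂ) + (Lq (1, 0) : ℂ) * Complex.I with hc
  have hC : HasFDerivAt (𝕜 := ℂ)
      (fun w : ℂ => (P (w.re, w.im) : ℂ) + (Q (w.re, w.im) : ℂ) * Complex.I)
      (c • (1 : ℂ →L[ℂ] ℂ)) z := by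
    refine hasFDerivAt_of_restrictScalars ℝ hψ ?_
    ext h
    have hdec : ∀ L : (ℝ × ℝ) →L[ℝ] ℝ, L (h.re, h.im) = h.re * L (1, 0) + h.im * L (0, 1) := by
      intro L
      have : ((h.re, h.im) : ℝ × ℝ) = h.re • ((1 : ℝ), (0 : ℝ)) + h.im • ((0 : ℝ), (1 : ℝ)) := by
        simp
      rw [this, map_add, map_smul, map_smul]; simp [smul_eq_mul]
    simp only [ContinuousLinearMap.coe_restrictScalars', ContinuousLinearMap.smul_apply,
      ContinuousLinearMap.one_apply, ContinuousLinearMap.add_apply,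
      ContinuousLinearMap.coe_comp', Function.comp_apply, ContinuousLinearMap.smul_apply,
      ContinuousLinearMap.prod_apply, Complex.reCLM_apply, Complex.imCLM_apply,
      Complex.ofRealCLM_apply, smul_eq_mul, hdec, h1, h2, hc]
    rw [Complex.ext_iff]
    constructor <;> simp [Complex.add_re, Complex.add_im, Complex.mul_re, Complex.mul_im] <;> ring
  have := hC.hasDerivAt
  simpa using this

theorem stmt_5 (f : ℝ → ℝ → ℝ) (H : ℝ)
    (hf : ContDiff ℝ (⊤ : ℕ∞) (Function.uncurry f))
    (hH : ∀ x y : ℝ, fxx f x y + fyy f x y = 2 * H) :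
    (∃ c : ℝ, Set.range (fun p : ℝ × ℝ => Kgauss f p.1 p.2) = {c}) ∨
    Set.range (fun p : ℝ × ℝ => Kgauss f p.1 p.2) = Set.Iio (H ^ 2) ∨
    Set.range (fun p : ℝ × ℝ => Kgauss f p.1 p.2) = Set.Iic (H ^ 2) := by
  set F : ℝ × ℝ → ℝ := Function.uncurry f with hF
  have hFd : Differentiable ℝ F := hf.differentiable (by simp)
  set g1 : ℝ × ℝ → ℝ := fun p => fderiv ℝ F p (1, 0) with hg1def
  set g2 : ℝ × ℝ → ℝ := fun p => fderiv ℝ F p (0, 1) with hg2def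
  have hDF : ContDiff ℝ 1 (fderiv ℝ F) :=
    (hf.of_le (WithTop.coe_le_coe.mpr le_top)).fderiv_right (le_refl _)
  have hg1 : ContDiff ℝ 1 g1 := hDF.clm_apply contDiff_const
  have hg2 : ContDiff ℝ 1 g2 := hDF.clm_apply contDiff_const
  have hg1d : Differentiable ℝ g1 := hg1.differentiable one_ne_zero
  have hg2d : Differentiable ℝ g2 := hg2.differentiable one_ne_zero
  -- first partials
  have hpdx : ∀ x y : ℝ, pdx f x y = g1 (x, y) := fun x y => deriv_fst' hFd x y
  have hpdy : ∀ x y : ℝ, pdy f x y = g2 (x, y) := fun x y => deriv_snd' hFd x y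
  -- second partials
  have hfxx : ∀ x y : ℝ, fxx f x y = fderiv ℝ g1 (x, y) (1, 0) := by
    intro x y
    have : (fun t => pdx f t y) = fun t => g1 (t, y) := funext fun t => hpdx t y
    show deriv (fun t => pdx f t y) x = _
    rw [this]
    exact deriv_fst' hg1d x y
  have hfxy : ∀ x y : ℝ, fxy f x y = fderiv ℝ g1 (x, y) (0, 1) := by
    intro x y
    have : (fun t => pdx f x t) = fun t => g1 (x, t) := funext fun t => hpdx x t
    show deriv (fun t => pdx f x t) y = _
    rw [this]
    exact deriv_snd' hg1d x y
  have hfyy : ∀ x y : ℝ, fyy f x y = fderiv ℝ g2 (x, y) (0, 1) := by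
    intro x y
    have : (fun t => pdy f x t) = fun t => g2 (x, t) := funext fun t => hpdy x t
    show deriv (fun t => pdy f x t) y = _
    rw [this]
    exact deriv_snd' hg2d x y
  -- symmetry of second derivatives
  have hsymm : ∀ p : ℝ × ℝ, fderiv ℝ g2 p (1, 0) = fderiv ℝ g1 p (0, 1) := by
    intro p
    have hD : DifferentiableAt ℝ (fderiv ℝ F) p := (hDF.differentiable one_ne_zero) p
    have e2 : fderiv ℝ g2 p (1, 0) = fderiv ℝ (fderiv ℝ F) p (1, 0) (0, 1) :=
      fderiv_clm_apply_const' hD (0, 1) (1, 0)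
    have e1 : fderiv ℝ g1 p (0, 1) = fderiv ℝ (fderiv ℝ F) p (0, 1) (1, 0) :=
      fderiv_clm_apply_const' hD (1, 0) (0, 1)
    rw [e1, e2]
    exact second_derivative_symmetric (fun y => (hFd y).hasFDerivAt) hD.hasFDerivAt _ _
  -- abbreviations
  set A : ℝ × ℝ → ℝ := fun p => fderiv ℝ g1 p (1, 0) with hA
  set Bv : ℝ × ℝ → ℝ := fun p => fderiv ℝ g1 p (0, 1) with hB
  have hH' : ∀ p : ℝ × ℝ, fderiv ℝ g2 p (0, 1) = 2 * H - A p := by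
    intro p
    have := hH p.1 p.2
    rw [hfxx, hfyy] at this
    simp only [hA]
    linarith [this]
  -- the holomorphic function ψ
  set ψ : ℂ → ℂ := fun w : ℂ =>
      ((fun q : ℝ × ℝ => g1 q - H * q.1) (w.re, w.im) : ℂ) +
      ((fun q : ℝ × ℝ => H * q.2 - g2 q) (w.re, w.im) : ℂ) * Complex.I with hψdef
  have key : ∀ z : ℂ, HasDerivAt ψ
      (((A (z.re, z.im) - H : ℝ) : ℂ) + ((-(Bv (z.re, z.im)) : ℝ) : ℂ) * Complex.I) z := by
    intro z
    set p : ℝ × ℝ := (z.re, z.im) with hp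
    have hPd : HasFDerivAt (fun q : ℝ × ℝ => g1 q - H * q.1)
        (fderiv ℝ g1 p - H • ContinuousLinearMap.fst ℝ ℝ ℝ) p :=
      (hg1d p).hasFDerivAt.sub ((hasFDerivAt_fst).const_mul H)
    have hQd : HasFDerivAt (fun q : ℝ × ℝ => H * q.2 - g2 q)
        (H • ContinuousLinearMap.snd ℝ ℝ ℝ - fderiv ℝ g2 p) p :=
      ((hasFDerivAt_snd).const_mul H).sub (hg2d p).hasFDerivAt
    have h1 : (fderiv ℝ g1 p - H • ContinuousLinearMap.fst ℝ ℝ ℝ) ((1:ℝ), (0:ℝ)) =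
        (H • ContinuousLinearMap.snd ℝ ℝ ℝ - fderiv ℝ g2 p) ((0:ℝ), (1:ℝ)) := by
      simp [hH' p, hA, smul_eq_mul]
      ring
    have h2 : (fderiv ℝ g1 p - H • ContinuousLinearMap.fst ℝ ℝ ℝ) ((0:ℝ), (1:ℝ)) =
        -((H • ContinuousLinearMap.snd ℝ ℝ ℝ - fderiv ℝ g2 p) ((1:ℝ), (0:ℝ))) := by
      simp [hsymm p, hB, smul_eq_mul]
    have h := cr_hasDerivAt hPd hQd h1 h2
    convert h using 2 <;> simp [hsymm p, hA, hB, smul_eq_mul]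
  have hψdiff : Differentiable ℂ ψ := fun z => (key z).differentiableAt
  set φ : ℂ → ℂ := deriv ψ with hφdef
  have hφval : ∀ z : ℂ,
      φ z = ((A (z.re, z.im) - H : ℝ) : ℂ) + ((-(Bv (z.re, z.im)) : ℝ) : ℂ) * Complex.I :=
    fun z => (key z).deriv
  have hφdiff : Differentiable ℂ φ := by
    intro z
    exact (((hψdiff.differentiableOn.analyticOnNhd isOpen_univ).deriv) z (Set.mem_univ z)).differentiableAt
  -- Kgauss in terms of φ
  have hKφ : (fun p : ℝ × ℝ => Kgauss f p.1 p.2) =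
      (fun z : ℂ => H ^ 2 - Complex.normSq (φ z)) ∘ (fun p : ℝ × ℝ => (p.1 : ℂ) + (p.2 : ℂ) * Complex.I) := by
    funext p
    have hre : ((p.1 : ℂ) + (p.2 : ℂ) * Complex.I).re = p.1 := by simp
    have him : ((p.1 : ℂ) + (p.2 : ℂ) * Complex.I).im = p.2 := by simp
    have hv := hφval ((p.1 : ℂ) + (p.2 : ℂ) * Complex.I)
    rw [hre, him] at hv
    show Kgauss f p.1 p.2 = H ^ 2 - Complex.normSq (φ ((p.1 : ℂ) + (p.2 : ℂ) * Complex.I))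
    rw [hv]
    have hns : Complex.normSq (((A (p.1, p.2) - H : ℝ) : ℂ) + ((-(Bv (p.1, p.2)) : ℝ) : ℂ) * Complex.I)
        = (A (p.1, p.2) - H) ^ 2 + (Bv (p.1, p.2)) ^ 2 := by
      simp [Complex.normSq_apply]
      ring
    rw [hns]
    have e1 := hfxx p.1 p.2
    have e2 := hfxy p.1 p.2
    have e3 := hfyy p.1 p.2
    have e4 := hH' (p.1, p.2)
    rw [Kgauss, e1, e2, e3, e4]
    simp only [hA, hB]
    ring
  -- pass to range over ℂ
  have hsurj : Function.Surjective (fun p : ℝ × ℝ => (p.1 : ℂ) + (p.2 : ℂ) * Complex.I) :=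
    fun z => ⟨(z.re, z.im), z.re_add_im⟩
  have hS : Set.range (fun p : ℝ × ℝ => Kgauss f p.1 p.2) =
      Set.range (fun z : ℂ => H ^ 2 - Complex.normSq (φ z)) := by
    rw [hKφ, Set.range_comp, hsurj.range_eq, Set.image_univ]
  set G : ℂ → ℝ := fun z => H ^ 2 - Complex.normSq (φ z) with hG
  set S : Set ℝ := Set.range G with hSdef
  rw [hS]
  have hGcont : Continuous G := by
    have : Continuous φ := hφdiff.continuous
    exact continuous_const.sub (Complex.continuous_normSq.comp this)
  have hconn : IsPreconnected S := isPreconnected_range hGcont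
  have hle : ∀ z : ℂ, G z ≤ H ^ 2 := fun z => by
    have := Complex.normSq_nonneg (φ z); simp only [hG]; linarith
  by_cases hconst : ∀ z : ℂ, φ z = φ 0
  · left
    refine ⟨G 0, ?_⟩
    have : G = fun _ => G 0 := funext fun z => by simp only [hG, hconst z]
    rw [hSdef, this, Set.range_const]
  · push_neg at hconst
    obtain ⟨z₀, hz₀⟩ := hconst
    -- ‖φ‖ is unbounded
    have hunb : ∀ M : ℝ, ∃ z : ℂ, M < ‖φ z‖ := by
      intro M
      by_contra hcon
      push_neg at hcon
      have hb : Bornology.IsBounded (Set.range φ) := by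
        rw [isBounded_iff_forall_norm_le]
        exact ⟨M, by rintro x ⟨z, rfl⟩; exact hcon z⟩
      exact hz₀ (hφdiff.apply_eq_apply_of_bounded hb z₀ 0)
    -- ‖φ‖ has infimum 0
    have hinf : ∀ ε : ℝ, 0 < ε → ∃ z : ℂ, ‖φ z‖ < ε := by
      intro ε hε
      by_contra hcon
      push_neg at hcon
      have hne : ∀ z : ℂ, φ z ≠ 0 := fun z h0 => by
        have := hcon z; rw [h0] at this; simp at this; linarith
      have hinv : Differentiable ℂ fun z => (φ z)⁻¹ := hφdiff.inv hne
      have hb : Bornology.IsBounded (Set.range fun z => (φ z)⁻¹) := by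
        rw [isBounded_iff_forall_norm_le]
        refine ⟨ε⁻¹, ?_⟩
        rintro x ⟨z, rfl⟩
        rw [norm_inv]
        exact inv_anti₀ hε (hcon z)
      have := hinv.apply_eq_apply_of_bounded hb z₀ 0
      exact hz₀ (inv_injective this)
    -- elements of S below any bound
    have hS2 : ∀ M : ℝ, ∃ t ∈ S, t < M := by
      intro M
      obtain ⟨z, hz⟩ := hunb (max 1 (|H ^ 2| + |M|))
      refine ⟨G z, Set.mem_range_self z, ?_⟩
      have h1 : (1 : ℝ) < ‖φ z‖ := lt_of_le_of_lt (le_max_left _ _) hz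
      have h2 : |H ^ 2| + |M| < ‖φ z‖ := lt_of_le_of_lt (le_max_right _ _) hz
      have hnsq : Complex.normSq (φ z) = ‖φ z‖ ^ 2 :=
        (Complex.sq_norm (φ z)).symm
      simp only [hG, hnsq]
      nlinarith [abs_nonneg (H ^ 2), abs_nonneg M, le_abs_self (H ^ 2), neg_abs_le M]
    -- elements of S near H^2
    have hS3 : ∀ ε : ℝ, 0 < ε → ∃ t ∈ S, H ^ 2 - ε < t := by
      intro ε hε
      obtain ⟨z, hz⟩ := hinf (min 1 ε) (lt_min one_pos hε)
      refine ⟨G z, Set.mem_range_self z, ?_⟩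
      have h1 : ‖φ z‖ < 1 := lt_of_lt_of_le hz (min_le_left _ _)
      have h2 : ‖φ z‖ < ε := lt_of_lt_of_le hz (min_le_right _ _)
      have h0 : 0 ≤ ‖φ z‖ := norm_nonneg _
      have hnsq : Complex.normSq (φ z) = ‖φ z‖ ^ 2 :=
        (Complex.sq_norm (φ z)).symm
      simp only [hG, hnsq]
      nlinarith
    by_cases hmem : H ^ 2 ∈ S
    · right; right
      apply Set.Subset.antisymm
      · rintro t ⟨z, rfl⟩
        exact hle z
      · intro t ht
        rw [Set.mem_Iic] at ht
        obtain ⟨a, haS, ha⟩ := hS2 t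
        exact hconn.Icc_subset haS hmem ⟨le_of_lt ha, ht⟩
    · right; left
      apply Set.Subset.antisymm
      · rintro t ⟨z, rfl⟩
        exact lt_of_le_of_ne (hle z) (fun h => hmem (h ▸ Set.mem_range_self z))
      · intro t ht
        rw [Set.mem_Iio] at ht
        obtain ⟨a, haS, ha⟩ := hS2 t
        obtain ⟨b, hbS, hb⟩ := hS3 (H ^ 2 - t) (by linarith)
        have htb : t ≤ b := by linarith
        exact hconn.Icc_subset haS hbS ⟨le_of_lt ha, htb⟩
end

section
/- Let f : ℝ² → ℝ be a smooth bounded function and H ∈ ℝ a constant such that f_xx + f_yy = 2H at every point of ℝ². Then f is constant (and consequently H = 0); i.e., any bounded entire constant mean curvature graph in 𝕀³ is a horizontal plane. -/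
open MeasureTheory intervalIntegral Set

/-- Construction of a "gradient-zero" conclusion for a bounded-above function with
harmonic structure. -/
theorem grad_zero_of_harmonic_bdd (u P Q R : ℝ → ℝ → ℝ)
    (hu1 : ∀ x y, HasDerivAt (fun s => u s y) (P x y) x)
    (hu2 : ∀ x y, HasDerivAt (fun t => u x t) (Q x y) y)
    (hPc : Continuous fun p : ℝ × ℝ => P p.1 p.2)
    (hQc : Continuous fun p : ℝ × ℝ => Q p.1 p.2)
    (hRc : Continuous fun p : ℝ × ℝ => R p.1 p.2)
    (hP1 : ∀ x y, HasDerivAt (fun s => P s y) (R x y) x)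
    (hQ2 : ∀ x y, HasDerivAt (fun t => Q x t) (-(R x y)) y)
    (hbdd : ∃ C : ℝ, ∀ x y, u x y ≤ C) :
    ∀ x y, P x y = 0 ∧ Q x y = 0 := by
  -- basic continuity facts
  have hPx : ∀ x, Continuous fun t => P x t :=
    fun x => hPc.comp (continuous_const.prodMk continuous_id)
  have hPy : ∀ y, Continuous fun s => P s y :=
    fun y => hPc.comp (continuous_id.prodMk continuous_const)
  have hQx : ∀ x, Continuous fun t => Q x t :=
    fun x => hQc.comp (continuous_const.prodMk continuous_id)
  have hQy : ∀ y, Continuous fun s => Q s y :=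
    fun y => hQc.comp (continuous_id.prodMk continuous_const)
  -- the harmonic conjugate
  set v : ℝ → ℝ → ℝ := fun x y => (∫ t in (0:ℝ)..y, P x t) - ∫ s in (0:ℝ)..x, Q s 0 with hv
  have hvy : ∀ x y, HasDerivAt (fun t => v x t) (P x y) y := by
    intro x y
    simpa [hv] using (((hPx x).integral_hasStrictDerivAt 0 y).hasDerivAt).sub_const
      (∫ s in (0:ℝ)..x, Q s 0)
  have hRx : ∀ x, Continuous fun t => R x t :=
    fun x => hRc.comp (continuous_const.prodMk continuous_id)
  have hvx : ∀ x y, HasDerivAt (fun s => v s y) (-(Q x y)) x := by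
    intro x y
    have T2 : HasDerivAt (fun s => ∫ r in (0:ℝ)..s, Q r 0) (Q x 0) x :=
      ((hQy 0).integral_hasStrictDerivAt 0 x).hasDerivAt
    obtain ⟨M, hM⟩ : ∃ M, ∀ p ∈ (Metric.closedBall x 1 ×ˢ uIcc (0:ℝ) y),
        ‖R p.1 p.2‖ ≤ M := by
      have hcomp : IsCompact (Metric.closedBall x 1 ×ˢ uIcc (0:ℝ) y) :=
        (isCompact_closedBall _ _).prod isCompact_uIcc
      exact hcomp.exists_bound_of_continuousOn hRc.continuousOn
    have T1 : HasDerivAt (fun s => ∫ t in (0:ℝ)..y, P s t) (∫ t in (0:ℝ)..y, R x t) x := by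
      refine (intervalIntegral.hasDerivAt_integral_of_dominated_loc_of_deriv_le
        (F := fun s t => P s t) (F' := fun s t => R s t) (x₀ := x) (a := 0) (b := y) (s := Metric.ball x 1)
        (bound := fun _ => M) (Metric.ball_mem_nhds x one_pos) ?_ ?_ ?_ ?_ ?_ ?_).2
      · exact Filter.Eventually.of_forall fun s => (hPx s).aestronglyMeasurable
      · exact (hPx x).intervalIntegrable 0 y
      · exact (hRx x).aestronglyMeasurable
      · refine Filter.Eventually.of_forall fun t ht s hs => hM (s, t) ?_
        exact ⟨Metric.ball_subset_closedBall hs, uIoc_subset_uIcc ht⟩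
      · exact intervalIntegrable_const
      · exact Filter.Eventually.of_forall fun t _ s _ => hP1 s t
    have hRQ : (∫ t in (0:ℝ)..y, R x t) = Q x 0 - Q x y := by
      have h1 : ∀ t ∈ uIcc (0:ℝ) y, HasDerivAt (fun t => -Q x t) (R x t) t := by
        intro t _
        have h := (hQ2 x t).neg; rw [neg_neg] at h; exact h
      have h2 := intervalIntegral.integral_eq_sub_of_hasDerivAt h1
        ((hRx x).intervalIntegrable 0 y)
      rw [h2]; ring
    have := T1.sub T2
    rw [hRQ] at this
    rw [show -(Q x y) = Q x 0 - Q x y - Q x 0 by ring]; exact this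
  -- the holomorphic function F = u + i v
  set F : ℂ → ℂ := fun z => (u z.re z.im : ℂ) + (v z.re z.im : ℂ) * Complex.I with hF
  set w : ℂ → ℂ := fun z => (P z.re z.im : ℂ) - (Q z.re z.im : ℂ) * Complex.I with hw
  have hFd : ∀ z, HasDerivAt F (w z) z := by
    intro z₀
    rw [hasDerivAt_iff_isLittleO, Asymptotics.isLittleO_iff]
    intro c hc
    have hc4 : (0:ℝ) < c/4 := by linarith
    obtain ⟨δ₁, hδ₁, hPd⟩ := Metric.continuousAt_iff.1
      (hPc.continuousAt (x := (z₀.re, z₀.im))) (c/4) hc4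
    obtain ⟨δ₂, hδ₂, hQd⟩ := Metric.continuousAt_iff.1
      (hQc.continuousAt (x := (z₀.re, z₀.im))) (c/4) hc4
    have hδ : (0:ℝ) < min δ₁ δ₂ / 2 := by positivity
    filter_upwards [Metric.ball_mem_nhds z₀ hδ] with z hz
    set x := z.re with hx
    set y := z.im with hy
    set x₀ := z₀.re with hx₀
    set y₀ := z₀.im with hy₀
    set P₀ := P x₀ y₀ with hP₀
    set Q₀ := Q x₀ y₀ with hQ₀
    have hzn : ‖z - z₀‖ < min δ₁ δ₂ / 2 := by
      rwa [Metric.mem_ball, dist_eq_norm] at hz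
    have hzδ₁ : ‖z - z₀‖ < δ₁ := by
      have := min_le_left δ₁ δ₂; linarith
    have hzδ₂ : ‖z - z₀‖ < δ₂ := by
      have := min_le_right δ₁ δ₂; linarith
    have hxx : |x - x₀| ≤ ‖z - z₀‖ := by
      have := Complex.abs_re_le_norm (z - z₀)
      simpa [Complex.sub_re] using this
    have hyy : |y - y₀| ≤ ‖z - z₀‖ := by
      have := Complex.abs_im_le_norm (z - z₀)
      simpa [Complex.sub_im] using this
    have keyP : ∀ a b, |a - x₀| ≤ ‖z - z₀‖ → |b - y₀| ≤ ‖z - z₀‖ → |P a b - P₀| ≤ c/4 := by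
      intro a b ha hb
      have hd : dist (a, b) ((x₀ : ℝ), (y₀ : ℝ)) < δ₁ := by
        rw [Prod.dist_eq]
        exact max_lt (by rw [Real.dist_eq]; exact lt_of_le_of_lt ha hzδ₁)
          (by rw [Real.dist_eq]; exact lt_of_le_of_lt hb hzδ₁)
      have := hPd hd
      rw [Real.dist_eq] at this
      exact le_of_lt this
    have keyQ : ∀ a b, |a - x₀| ≤ ‖z - z₀‖ → |b - y₀| ≤ ‖z - z₀‖ → |Q a b - Q₀| ≤ c/4 := by
      intro a b ha hb
      have hd : dist (a, b) ((x₀ : ℝ), (y₀ : ℝ)) < δ₂ := by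
        rw [Prod.dist_eq]
        exact max_lt (by rw [Real.dist_eq]; exact lt_of_le_of_lt ha hzδ₂)
          (by rw [Real.dist_eq]; exact lt_of_le_of_lt hb hzδ₂)
      have := hQd hd
      rw [Real.dist_eq] at this
      exact le_of_lt this
    -- FTC on segments
    have hIP : IntervalIntegrable (fun s => P s y) volume x₀ x := (hPy y).intervalIntegrable _ _
    have hIQ : IntervalIntegrable (fun t => Q x₀ t) volume y₀ y := (hQx x₀).intervalIntegrable _ _
    have hIQ' : IntervalIntegrable (fun s => -(Q s y)) volume x₀ x :=
      ((hQy y).neg).intervalIntegrable _ _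
    have hIP' : IntervalIntegrable (fun t => P x₀ t) volume y₀ y := (hPx x₀).intervalIntegrable _ _
    have hA1 : ∫ s in x₀..x, P s y = u x y - u x₀ y :=
      integral_eq_sub_of_hasDerivAt (fun s _ => hu1 s y) hIP
    have hA2 : ∫ t in y₀..y, Q x₀ t = u x₀ y - u x₀ y₀ :=
      integral_eq_sub_of_hasDerivAt (fun t _ => hu2 x₀ t) hIQ
    have hB1 : ∫ s in x₀..x, -(Q s y) = v x y - v x₀ y :=
      integral_eq_sub_of_hasDerivAt (fun s _ => hvx s y) hIQ'
    have hB2 : ∫ t in y₀..y, P x₀ t = v x₀ y - v x₀ y₀ :=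
      integral_eq_sub_of_hasDerivAt (fun t _ => hvy x₀ t) hIP'
    -- bounds on the error integrals
    have b1 : |∫ s in x₀..x, (P s y - P₀)| ≤ c/4 * |x - x₀| := by
      have h := intervalIntegral.norm_integral_le_of_norm_le_const (C := c/4)
        (f := fun s => P s y - P₀) (a := x₀) (b := x) ?_
      · simpa [Real.norm_eq_abs] using h
      · intro s hs
        have hs' : |s - x₀| ≤ |x - x₀| := abs_sub_left_of_mem_uIcc (uIoc_subset_uIcc hs)
        simpa [Real.norm_eq_abs] using keyP s y (hs'.trans hxx) hyy
    have b2 : |∫ t in y₀..y, (Q x₀ t - Q₀)| ≤ c/4 * |y - y₀| := by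
      have h := intervalIntegral.norm_integral_le_of_norm_le_const (C := c/4)
        (f := fun t => Q x₀ t - Q₀) (a := y₀) (b := y) ?_
      · simpa [Real.norm_eq_abs] using h
      · intro t ht
        have ht' : |t - y₀| ≤ |y - y₀| := abs_sub_left_of_mem_uIcc (uIoc_subset_uIcc ht)
        simpa [Real.norm_eq_abs] using keyQ x₀ t (by simp) (ht'.trans hyy)
    have b3 : |∫ s in x₀..x, (-(Q s y) - (-Q₀))| ≤ c/4 * |x - x₀| := by
      have h := intervalIntegral.norm_integral_le_of_norm_le_const (C := c/4)
        (f := fun s => -(Q s y) - (-Q₀)) (a := x₀) (b := x) ?_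
      · simpa [Real.norm_eq_abs] using h
      · intro s hs
        have hs' : |s - x₀| ≤ |x - x₀| := abs_sub_left_of_mem_uIcc (uIoc_subset_uIcc hs)
        have h1 := keyQ s y (hs'.trans hxx) hyy
        show ‖-Q s y - -Q₀‖ ≤ c/4
        rw [Real.norm_eq_abs, show -Q s y - -Q₀ = -(Q s y - Q₀) by ring, abs_neg]
        exact h1
    have b4 : |∫ t in y₀..y, (P x₀ t - P₀)| ≤ c/4 * |y - y₀| := by
      have h := intervalIntegral.norm_integral_le_of_norm_le_const (C := c/4)
        (f := fun t => P x₀ t - P₀) (a := y₀) (b := y) ?_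
      · simpa [Real.norm_eq_abs] using h
      · intro t ht
        have ht' : |t - y₀| ≤ |y - y₀| := abs_sub_left_of_mem_uIcc (uIoc_subset_uIcc ht)
        simpa [Real.norm_eq_abs] using keyP x₀ t (by simp) (ht'.trans hyy)
    -- identify the error integrals
    have q1 : ∫ s in x₀..x, (P s y - P₀) = (u x y - u x₀ y) - (x - x₀) * P₀ := by
      rw [intervalIntegral.integral_sub hIP intervalIntegrable_const, hA1,
        intervalIntegral.integral_const, smul_eq_mul]
    have q2 : ∫ t in y₀..y, (Q x₀ t - Q₀) = (u x₀ y - u x₀ y₀) - (y - y₀) * Q₀ := by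
      rw [intervalIntegral.integral_sub hIQ intervalIntegrable_const, hA2,
        intervalIntegral.integral_const, smul_eq_mul]
    have q3 : ∫ s in x₀..x, (-(Q s y) - (-Q₀)) = (v x y - v x₀ y) + (x - x₀) * Q₀ := by
      rw [intervalIntegral.integral_sub hIQ' intervalIntegrable_const, hB1,
        intervalIntegral.integral_const, smul_eq_mul]
      ring
    have q4 : ∫ t in y₀..y, (P x₀ t - P₀) = (v x₀ y - v x₀ y₀) - (y - y₀) * P₀ := by
      rw [intervalIntegral.integral_sub hIP' intervalIntegrable_const, hB2,
        intervalIntegral.integral_const, smul_eq_mul]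
    -- the real and imaginary parts of the error
    have e1 : |(u x y - u x₀ y₀) - ((x - x₀) * P₀ + (y - y₀) * Q₀)| ≤ c/2 * ‖z - z₀‖ := by
      have heq : (u x y - u x₀ y₀) - ((x - x₀) * P₀ + (y - y₀) * Q₀)
          = (∫ s in x₀..x, (P s y - P₀)) + ∫ t in y₀..y, (Q x₀ t - Q₀) := by
        rw [q1, q2]; ring
      rw [heq]
      calc |(∫ s in x₀..x, (P s y - P₀)) + ∫ t in y₀..y, (Q x₀ t - Q₀)|
          ≤ |∫ s in x₀..x, (P s y - P₀)| + |∫ t in y₀..y, (Q x₀ t - Q₀)| := abs_add_le _ _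
        _ ≤ c/4 * |x - x₀| + c/4 * |y - y₀| := add_le_add b1 b2
        _ ≤ c/4 * ‖z - z₀‖ + c/4 * ‖z - z₀‖ :=
            add_le_add (mul_le_mul_of_nonneg_left hxx hc4.le)
              (mul_le_mul_of_nonneg_left hyy hc4.le)
        _ = c/2 * ‖z - z₀‖ := by ring
    have e2 : |(v x y - v x₀ y₀) - (-((x - x₀) * Q₀) + (y - y₀) * P₀)| ≤ c/2 * ‖z - z₀‖ := by
      have heq : (v x y - v x₀ y₀) - (-((x - x₀) * Q₀) + (y - y₀) * P₀)
          = (∫ s in x₀..x, (-(Q s y) - (-Q₀))) + ∫ t in y₀..y, (P x₀ t - P₀) := by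
        rw [q3, q4]; ring
      rw [heq]
      calc |(∫ s in x₀..x, (-(Q s y) - (-Q₀))) + ∫ t in y₀..y, (P x₀ t - P₀)|
          ≤ |∫ s in x₀..x, (-(Q s y) - (-Q₀))| + |∫ t in y₀..y, (P x₀ t - P₀)| := abs_add_le _ _
        _ ≤ c/4 * |x - x₀| + c/4 * |y - y₀| := add_le_add b3 b4
        _ ≤ c/4 * ‖z - z₀‖ + c/4 * ‖z - z₀‖ :=
            add_le_add (mul_le_mul_of_nonneg_left hxx hc4.le)
              (mul_le_mul_of_nonneg_left hyy hc4.le)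
        _ = c/2 * ‖z - z₀‖ := by ring
    -- assemble
    have hre : (F z - F z₀ - (z - z₀) • w z₀).re
        = (u x y - u x₀ y₀) - ((x - x₀) * P₀ + (y - y₀) * Q₀) := by
      simp only [hF, hw, smul_eq_mul, Complex.sub_re, Complex.add_re, Complex.mul_re,
        Complex.mul_im, Complex.ofReal_re, Complex.ofReal_im, Complex.I_re, Complex.I_im,
        Complex.sub_im, Complex.add_im]
      ring
    have him : (F z - F z₀ - (z - z₀) • w z₀).im
        = (v x y - v x₀ y₀) - (-((x - x₀) * Q₀) + (y - y₀) * P₀) := by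
      simp only [hF, hw, smul_eq_mul, Complex.sub_re, Complex.add_re, Complex.mul_re,
        Complex.mul_im, Complex.ofReal_re, Complex.ofReal_im, Complex.I_re, Complex.I_im,
        Complex.sub_im, Complex.add_im]
      ring
    calc ‖F z - F z₀ - (z - z₀) • w z₀‖
        ≤ |(F z - F z₀ - (z - z₀) • w z₀).re| + |(F z - F z₀ - (z - z₀) • w z₀).im| := by
          exact Complex.norm_le_abs_re_add_abs_im _
      _ ≤ c/2 * ‖z - z₀‖ + c/2 * ‖z - z₀‖ := by
          rw [hre, him]; exact add_le_add e1 e2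
      _ = c * ‖z - z₀‖ := by ring
  -- Liouville applied to exp F
  obtain ⟨C, hC⟩ := hbdd
  have hGd : Differentiable ℂ fun z => Complex.exp (F z) :=
    fun z => ((hFd z).cexp).differentiableAt
  have hGb : Bornology.IsBounded (Set.range fun z => Complex.exp (F z)) := by
    rw [Metric.isBounded_iff_subset_closedBall 0]
    refine ⟨Real.exp C, ?_⟩
    rintro _ ⟨z, rfl⟩
    simp only [Metric.mem_closedBall, dist_zero_right, Complex.norm_exp]
    have : (F z).re = u z.re z.im := by
      simp [hF]
    rw [this]
    exact Real.exp_le_exp.2 (hC _ _)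
  have hGconst : ∀ z, Complex.exp (F z) = Complex.exp (F 0) := fun z =>
    hGd.apply_eq_apply_of_bounded hGb z 0
  have hw0 : ∀ z, w z = 0 := by
    intro z
    have h1 : HasDerivAt (fun z => Complex.exp (F z)) (Complex.exp (F z) * w z) z :=
      (hFd z).cexp
    have h2 : HasDerivAt (fun z => Complex.exp (F z)) 0 z := by
      have : (fun z => Complex.exp (F z)) = fun _ => Complex.exp (F 0) := funext hGconst
      rw [this]; exact hasDerivAt_const _ _
    have := h1.unique h2
    have hne := Complex.exp_ne_zero (F z)
    exact (mul_eq_zero.1 this).resolve_left hne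
  intro x y
  have h := hw0 (x + y * Complex.I)
  rw [hw] at h
  simp only [Complex.add_re, Complex.ofReal_re, Complex.mul_I_re, Complex.ofReal_im,
    Complex.add_im, Complex.mul_I_im, neg_zero, add_zero, zero_add] at h
  have hre := congrArg Complex.re h
  have him := congrArg Complex.im h
  simp [Complex.sub_re, Complex.sub_im, Complex.mul_I_re, Complex.mul_I_im] at hre him
  exact ⟨hre, him⟩

lemma hasDerivAt_fst' {g : ℝ × ℝ → ℝ} (hg : Differentiable ℝ g) (x y : ℝ) :
    HasDerivAt (fun t => g (t, y)) (fderiv ℝ g (x, y) (1, 0)) x := by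
  have h1 : HasDerivAt (fun t : ℝ => (t, y)) ((1:ℝ), (0:ℝ)) x :=
    (hasDerivAt_id x).prodMk (hasDerivAt_const x y)
  exact (hg (x, y)).hasFDerivAt.comp_hasDerivAt x h1

lemma hasDerivAt_snd' {g : ℝ × ℝ → ℝ} (hg : Differentiable ℝ g) (x y : ℝ) :
    HasDerivAt (fun t => g (x, t)) (fderiv ℝ g (x, y) (0, 1)) y := by
  have h1 : HasDerivAt (fun t : ℝ => (x, t)) ((0:ℝ), (1:ℝ)) y :=
    (hasDerivAt_const y x).prodMk (hasDerivAt_id y)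
  exact (hg (x, y)).hasFDerivAt.comp_hasDerivAt y h1

theorem key_lemma (f : ℝ → ℝ → ℝ) (H : ℝ)
    (hf : ContDiff ℝ (⊤ : ℕ∞) (Function.uncurry f))
    (hbdd : ∃ C : ℝ, ∀ x y : ℝ, |f x y| ≤ C)
    (hH : ∀ x y : ℝ, fxx f x y + fyy f x y = 2 * H) (hH0 : 0 ≤ H) :
    (∀ x y : ℝ, f x y = f 0 0) ∧ H = 0 := by
  have hd : Differentiable ℝ (Function.uncurry f) := hf.differentiable (by simp)
  set D1 : ℝ × ℝ → ℝ := fun p => fderiv ℝ (Function.uncurry f) p (1, 0) with hD1def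
  set D2 : ℝ × ℝ → ℝ := fun p => fderiv ℝ (Function.uncurry f) p (0, 1) with hD2def
  have hD1 : ContDiff ℝ (⊤ : ℕ∞) D1 := (hf.fderiv_right (by simp)).clm_apply contDiff_const
  have hD2 : ContDiff ℝ (⊤ : ℕ∞) D2 := (hf.fderiv_right (by simp)).clm_apply contDiff_const
  have hpdx : pdx f = fun a b => D1 (a, b) :=
    funext fun a => funext fun b => (hasDerivAt_fst' hd a b).deriv
  have hpdy : pdy f = fun a b => D2 (a, b) :=
    funext fun a => funext fun b => (hasDerivAt_snd' hd a b).deriv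
  have hfxx : ∀ x y, fxx f x y = fderiv ℝ D1 (x, y) (1, 0) := by
    intro x y
    show deriv (fun t => pdx f t y) x = _
    rw [hpdx]
    exact (hasDerivAt_fst' (hD1.differentiable (by simp)) x y).deriv
  have hfyy : ∀ x y, fyy f x y = fderiv ℝ D2 (x, y) (0, 1) := by
    intro x y
    show deriv (fun t => pdy f x t) y = _
    rw [hpdy]
    exact (hasDerivAt_snd' (hD2.differentiable (by simp)) x y).deriv
  -- hypotheses for the analytic core lemma
  have hu1' : ∀ x y : ℝ, HasDerivAt (fun s => f s y - H * y ^ 2) (pdx f x y) x := by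
    intro x y
    have h := (hasDerivAt_fst' hd x y).sub_const (H * y ^ 2)
    rw [hpdx]
    exact h
  have hu2' : ∀ x y : ℝ, HasDerivAt (fun t => f x t - H * t ^ 2) (pdy f x y - 2 * H * y) y := by
    intro x y
    have h0 : HasDerivAt (fun t => f x t) (pdy f x y) y := by
      rw [hpdy]; exact hasDerivAt_snd' hd x y
    have h := h0.sub ((hasDerivAt_pow 2 y).const_mul H)
    rw [show pdy f x y - 2 * H * y = pdy f x y - H * (((2:ℕ):ℝ) * y ^ (2 - 1)) by
      rw [show (2:ℕ) - 1 = 1 from rfl]; push_cast; ring]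
    exact h
  have hP1' : ∀ x y : ℝ, HasDerivAt (fun s => pdx f s y) (fxx f x y) x := by
    intro x y
    rw [hpdx, hfxx]
    exact hasDerivAt_fst' (hD1.differentiable (by simp)) x y
  have hQ2' : ∀ x y : ℝ, HasDerivAt (fun t => pdy f x t - 2 * H * t) (-(fxx f x y)) y := by
    intro x y
    have h0 : HasDerivAt (fun t => pdy f x t) (fyy f x y) y := by
      rw [hpdy, hfyy]
      exact hasDerivAt_snd' (hD2.differentiable (by simp)) x y
    have h := h0.sub ((hasDerivAt_id y).const_mul (2 * H))
    have h2 : fyy f x y - 2 * H * 1 = -(fxx f x y) := by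
      have := hH x y; linarith
    rw [h2] at h
    exact h
  have hPc' : Continuous fun p : ℝ × ℝ => pdx f p.1 p.2 := by
    rw [hpdx]; exact hD1.continuous
  have hQc' : Continuous fun p : ℝ × ℝ => pdy f p.1 p.2 - 2 * H * p.2 := by
    rw [hpdy]
    exact hD2.continuous.sub (by fun_prop)
  have hRc' : Continuous fun p : ℝ × ℝ => fxx f p.1 p.2 := by
    have heq : (fun p : ℝ × ℝ => fxx f p.1 p.2) = fun p => fderiv ℝ D1 p (1, 0) :=
      funext fun p => hfxx p.1 p.2
    rw [heq]
    have h5 : ContDiff ℝ (⊤ : ℕ∞) fun p : ℝ × ℝ => fderiv ℝ D1 p (1, 0) :=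
      (hD1.fderiv_right (by simp)).clm_apply contDiff_const
    exact h5.continuous
  have hbdd' : ∃ C : ℝ, ∀ x y : ℝ, f x y - H * y ^ 2 ≤ C := by
    obtain ⟨C, hC⟩ := hbdd
    refine ⟨C, fun x y => ?_⟩
    have h1 := (abs_le.1 (hC x y)).2
    nlinarith [sq_nonneg y]
  have hcore := grad_zero_of_harmonic_bdd (fun x y => f x y - H * y ^ 2) (pdx f)
    (fun x y => pdy f x y - 2 * H * y) (fxx f) hu1' hu2' hPc' hQc' hRc' hP1' hQ2' hbdd'
  -- endgame
  have hconst1 : ∀ x y : ℝ, f x y = f 0 y := by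
    intro x y
    have hdiff : Differentiable ℝ (fun t => f t y) :=
      fun t => (hasDerivAt_fst' hd t y).differentiableAt
    have hder : ∀ t, deriv (fun s => f s y) t = 0 := fun t => (hcore t y).1
    exact is_const_of_deriv_eq_zero hdiff hder x 0
  have hfy : ∀ y : ℝ, f 0 y = f 0 0 + H * y ^ 2 := by
    intro y
    have hdiff : Differentiable ℝ (fun t => f 0 t - H * t ^ 2) :=
      fun t => (hu2' 0 t).differentiableAt
    have hder : ∀ t, deriv (fun t => f 0 t - H * t ^ 2) t = 0 := by
      intro t
      rw [(hu2' 0 t).deriv]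
      exact (hcore 0 t).2
    have h := is_const_of_deriv_eq_zero hdiff hder y 0
    simp only [ne_eq, OfNat.ofNat_ne_zero, not_false_eq_true, zero_pow, mul_zero,
      sub_zero] at h
    linarith
  have hHzero : H = 0 := by
    by_contra hne
    have hpos : 0 < H := lt_of_le_of_ne hH0 (Ne.symm hne)
    obtain ⟨C, hC⟩ := hbdd
    have hC0 : 0 ≤ C := le_trans (abs_nonneg _) (hC 0 0)
    set y := Real.sqrt ((C + |f 0 0| + 1) / H) with hy
    have hy2 : y ^ 2 = (C + |f 0 0| + 1) / H := Real.sq_sqrt (by positivity)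
    have h1 := hC 0 y
    rw [hfy y] at h1
    have h2 : H * y ^ 2 = C + |f 0 0| + 1 := by
      rw [hy2]; field_simp
    have h3 := (abs_le.1 h1).2
    have h4 := neg_abs_le (f 0 0)
    linarith
  refine ⟨fun x y => ?_, hHzero⟩
  rw [hconst1 x y, hfy y, hHzero]
  ring

theorem stmt_7 (f : ℝ → ℝ → ℝ) (H : ℝ)
    (hf : ContDiff ℝ (⊤ : ℕ∞) (Function.uncurry f))
    (hbdd : ∃ C : ℝ, ∀ x y : ℝ, |f x y| ≤ C)
    (hH : ∀ x y : ℝ, fxx f x y + fyy f x y = 2 * H) :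
    (∀ x y : ℝ, f x y = f 0 0) ∧ H = 0 := by
  rcases le_or_gt 0 H with h | h
  · exact key_lemma f H hf hbdd hH h
  · exfalso
    set g : ℝ → ℝ → ℝ := fun x y => -f x y with hg
    have hgc : ContDiff ℝ (⊤ : ℕ∞) (Function.uncurry g) := hf.neg
    have hgb : ∃ C : ℝ, ∀ x y : ℝ, |g x y| ≤ C := by
      obtain ⟨C, hC⟩ := hbdd
      exact ⟨C, fun x y => by simpa [hg, abs_neg] using hC x y⟩
    have hpdxg : pdx g = fun a b => -pdx f a b := by
      funext a b
      show deriv (fun t => -f t b) a = -deriv (fun t => f t b) a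
      exact deriv.neg
    have hpdyg : pdy g = fun a b => -pdy f a b := by
      funext a b
      show deriv (fun t => -f a t) b = -deriv (fun t => f a t) b
      exact deriv.neg
    have hfxxg : ∀ x y, fxx g x y = -fxx f x y := by
      intro x y
      show deriv (fun t => pdx g t y) x = _
      rw [hpdxg]
      show deriv (fun t => -pdx f t y) x = -deriv (fun t => pdx f t y) x
      exact deriv.neg
    have hfyyg : ∀ x y, fyy g x y = -fyy f x y := by
      intro x y
      show deriv (fun t => pdy g x t) y = _
      rw [hpdyg]
      show deriv (fun t => -pdy f x t) y = -deriv (fun t => pdy f x t) y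
      exact deriv.neg
    have hgH : ∀ x y : ℝ, fxx g x y + fyy g x y = 2 * (-H) := by
      intro x y
      rw [hfxxg, hfyyg]
      have := hH x y
      linarith
    have := (key_lemma g (-H) hgc hgb hgH (by linarith)).2
    linarith
end

section
/- Let f : ℝ² → ℝ be a smooth function and H ∈ ℝ a constant such that f_xx + f_yy = 2H at every point of ℝ². Then there exists an entire holomorphic function φ : ℂ → ℂ such that for all (x, y) ∈ ℝ², f_xx(x,y)·f_yy(x,y) − f_xy(x,y)² = H² − |φ(x + iy)|². -/
namespace Stmt8Aux

/-- Directional derivative in the (1,0) direction. -/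
noncomputable def D1 (F : ℝ × ℝ → ℝ) (p : ℝ × ℝ) : ℝ := fderiv ℝ F p (1, 0)

/-- Directional derivative in the (0,1) direction. -/
noncomputable def D2 (F : ℝ × ℝ → ℝ) (p : ℝ × ℝ) : ℝ := fderiv ℝ F p (0, 1)

lemma contDiff_D1 {F : ℝ × ℝ → ℝ} (hF : ContDiff ℝ (⊤ : ℕ∞) F) : ContDiff ℝ (⊤ : ℕ∞) (D1 F) :=
  (hF.fderiv_right (by simp)).clm_apply contDiff_const

lemma contDiff_D2 {F : ℝ × ℝ → ℝ} (hF : ContDiff ℝ (⊤ : ℕ∞) F) : ContDiff ℝ (⊤ : ℕ∞) (D2 F) :=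
  (hF.fderiv_right (by simp)).clm_apply contDiff_const

lemma pdx_eq {g : ℝ → ℝ → ℝ} (hg : ContDiff ℝ (⊤ : ℕ∞) (Function.uncurry g)) (x y : ℝ) :
    pdx g x y = D1 (Function.uncurry g) (x, y) := by
  have h1 : HasDerivAt (fun t : ℝ => (t, y)) ((1 : ℝ), (0 : ℝ)) x :=
    (hasDerivAt_id x).prodMk (hasDerivAt_const x y)
  have h2 := ((hg.differentiable (by simp) (x, y)).hasFDerivAt).comp_hasDerivAt x h1
  exact h2.deriv

lemma pdy_eq {g : ℝ → ℝ → ℝ} (hg : ContDiff ℝ (⊤ : ℕ∞) (Function.uncurry g)) (x y : ℝ) :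
    pdy g x y = D2 (Function.uncurry g) (x, y) := by
  have h1 : HasDerivAt (fun t : ℝ => (x, t)) ((0 : ℝ), (1 : ℝ)) y :=
    (hasDerivAt_const y x).prodMk (hasDerivAt_id y)
  have h2 := ((hg.differentiable (by simp) (x, y)).hasFDerivAt).comp_hasDerivAt y h1
  exact h2.deriv

lemma uncurry_pdx {g : ℝ → ℝ → ℝ} (hg : ContDiff ℝ (⊤ : ℕ∞) (Function.uncurry g)) :
    Function.uncurry (pdx g) = D1 (Function.uncurry g) := by
  funext p
  have := pdx_eq hg p.1 p.2
  exact this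

lemma uncurry_pdy {g : ℝ → ℝ → ℝ} (hg : ContDiff ℝ (⊤ : ℕ∞) (Function.uncurry g)) :
    Function.uncurry (pdy g) = D2 (Function.uncurry g) := by
  funext p
  have := pdy_eq hg p.1 p.2
  exact this

/-- Clairaut / symmetry of second derivatives in directional form. -/
lemma swapD {G : ℝ × ℝ → ℝ} (hG : ContDiff ℝ (⊤ : ℕ∞) G) (p : ℝ × ℝ) :
    D1 (D2 G) p = D2 (D1 G) p := by
  have hd : ∀ q, HasFDerivAt G (fderiv ℝ G q) q := fun q =>
    (hG.differentiable (by simp) q).hasFDerivAt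
  have hcd : ContDiff ℝ (⊤ : ℕ∞) (fderiv ℝ G) := hG.fderiv_right (by simp)
  have hd2 : HasFDerivAt (fderiv ℝ G) (fderiv ℝ (fderiv ℝ G) p) p :=
    (hcd.differentiable (by simp) p).hasFDerivAt
  have hsym := second_derivative_symmetric hd hd2 (1, 0) (0, 1)
  have e1 : fderiv ℝ (fun q => fderiv ℝ G q ((0 : ℝ), (1 : ℝ))) p =
      (fderiv ℝ (fderiv ℝ G) p).flip (0, 1) := by
    rw [fderiv_clm_apply (hcd.differentiable (by simp) p) (differentiableAt_const _)]
    simp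
  have e2 : fderiv ℝ (fun q => fderiv ℝ G q ((1 : ℝ), (0 : ℝ))) p =
      (fderiv ℝ (fderiv ℝ G) p).flip (1, 0) := by
    rw [fderiv_clm_apply (hcd.differentiable (by simp) p) (differentiableAt_const _)]
    simp
  show fderiv ℝ (D2 G) p (1, 0) = fderiv ℝ (D1 G) p (0, 1)
  unfold D1 D2
  rw [e1, e2]
  simpa using hsym

end Stmt8Aux

open Stmt8Aux Complex

theorem stmt_8 (f : ℝ → ℝ → ℝ) (H : ℝ)
    (hf : ContDiff ℝ (⊤ : ℕ∞) (Function.uncurry f))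
    (hH : ∀ x y : ℝ, fxx f x y + fyy f x y = 2 * H) :
    ∃ φ : ℂ → ℂ, Differentiable ℂ φ ∧
      ∀ x y : ℝ, Kgauss f x y = H ^ 2 - ‖φ (x + y * Complex.I)‖ ^ 2 := by
  set F := Function.uncurry f with hF
  -- second partials in terms of D1, D2
  have hD1 : ContDiff ℝ (⊤ : ℕ∞) (D1 F) := contDiff_D1 hf
  have hD2 : ContDiff ℝ (⊤ : ℕ∞) (D2 F) := contDiff_D2 hf
  have hu1 : Function.uncurry (pdx f) = D1 F := uncurry_pdx hf
  have hu2 : Function.uncurry (pdy f) = D2 F := uncurry_pdy hf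
  have hpdx : ContDiff ℝ (⊤ : ℕ∞) (Function.uncurry (pdx f)) := hu1 ▸ hD1
  have hpdy : ContDiff ℝ (⊤ : ℕ∞) (Function.uncurry (pdy f)) := hu2 ▸ hD2
  have hfxx : ∀ x y : ℝ, fxx f x y = D1 (D1 F) (x, y) := by
    intro x y
    have := pdx_eq hpdx x y
    rwa [hu1] at this
  have hfxy : ∀ x y : ℝ, fxy f x y = D2 (D1 F) (x, y) := by
    intro x y
    have := pdy_eq hpdx x y
    rwa [hu1] at this
  have hfyy : ∀ x y : ℝ, fyy f x y = D2 (D2 F) (x, y) := by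
    intro x y
    have := pdy_eq hpdy x y
    rwa [hu2] at this
  -- the Laplace-type equation, in D-form
  have hLap : ∀ p : ℝ × ℝ, D1 (D1 F) p + D2 (D2 F) p = 2 * H := by
    intro p
    have := hH p.1 p.2
    rwa [hfxx, hfyy, Prod.mk.eta] at this
  -- define u, v and φ
  set u : ℝ × ℝ → ℝ := fun p => D1 (D1 F) p - H with hu_def
  set v : ℝ × ℝ → ℝ := fun p => -(D2 (D1 F) p) with hv_def
  have hu_smooth : ContDiff ℝ (⊤ : ℕ∞) u := (contDiff_D1 hD1).sub contDiff_const
  have hv_smooth : ContDiff ℝ (⊤ : ℕ∞) v := (contDiff_D2 hD1).neg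
  set ψ : ℝ × ℝ → ℂ := fun p => (u p : ℂ) + (v p : ℂ) * Complex.I with hψ_def
  refine ⟨fun z => ψ (z.re, z.im), ?_, ?_⟩
  · -- differentiability via Cauchy–Riemann
    intro z
    set p : ℝ × ℝ := (z.re, z.im) with hp
    set A := fderiv ℝ u p with hA
    set B := fderiv ℝ v p with hB
    -- Cauchy–Riemann relations
    have hAu : ∀ w, A w = fderiv ℝ (D1 (D1 F)) p w := by
      intro w
      have : fderiv ℝ u p = fderiv ℝ (D1 (D1 F)) p := by
        rw [hu_def]
        rw [fderiv_fun_sub ((contDiff_D1 hD1).differentiable (by simp) p) (differentiableAt_const _)]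
        simp
      rw [hA, this]
    have hBv : ∀ w, B w = -(fderiv ℝ (D2 (D1 F)) p w) := by
      intro w
      have : fderiv ℝ v p = -(fderiv ℝ (D2 (D1 F)) p) := by
        rw [hv_def, fderiv_fun_neg]
      rw [hB, this]; simp
    -- CR1 : A (0,1) = - B (1,0)
    have hCR1 : A (0, 1) = -B (1, 0) := by
      rw [hAu, hBv]
      show D2 (D1 (D1 F)) p = _
      rw [neg_neg]
      show _ = D1 (D2 (D1 F)) p
      exact (swapD hD1 p).symm
    -- CR2 : B (0,1) = A (1,0)
    have hCR2 : B (0, 1) = A (1, 0) := by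
      rw [hAu, hBv]
      show -(D2 (D2 (D1 F)) p) = D1 (D1 (D1 F)) p
      -- differentiate the Laplace identity in direction (1,0)
      have hW : (fun q => D1 (D1 F) q + D2 (D2 F) q) = fun _ => 2 * H := funext hLap
      have hdW : fderiv ℝ (fun q => D1 (D1 F) q + D2 (D2 F) q) p = 0 := by
        rw [hW]; exact fderiv_const_apply _
      have hsum : D1 (D1 (D1 F)) p + D1 (D2 (D2 F)) p = 0 := by
        have := fderiv_fun_add ((contDiff_D1 hD1).differentiable (by simp) p)
          ((contDiff_D2 hD2).differentiable (by simp) p)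
        show fderiv ℝ (D1 (D1 F)) p (1, 0) + fderiv ℝ (D2 (D2 F)) p (1, 0) = 0
        have h2 : fderiv ℝ (D1 (D1 F)) p (1, 0) + fderiv ℝ (D2 (D2 F)) p (1, 0) =
            fderiv ℝ (fun q => D1 (D1 F) q + D2 (D2 F) q) p (1, 0) := by
          rw [this]; simp
        rw [h2, hdW]; simp
      -- D1 (D2 (D2 F)) = D2 (D2 (D1 F)) by two swaps
      have hswap2 : D1 (D2 (D2 F)) p = D2 (D2 (D1 F)) p := by
        have e1 : D1 (D2 (D2 F)) p = D2 (D1 (D2 F)) p := swapD hD2 p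
        have e2 : D1 (D2 F) = D2 (D1 F) := funext fun q => swapD hf q
        rw [e1, e2]
      have := hsum
      rw [hswap2] at this
      linarith
    -- real derivative of ψ
    have hU : HasFDerivAt u A p := (hu_smooth.differentiable (by simp) p).hasFDerivAt
    have hV : HasFDerivAt v B p := (hv_smooth.differentiable (by simp) p).hasFDerivAt
    set L : (ℝ × ℝ) →L[ℝ] ℂ := A.smulRight 1 + B.smulRight Complex.I with hL
    have hψ' : HasFDerivAt ψ L p := by
      have h := (hU.smul_const (1 : ℂ)).add (hV.smul_const Complex.I)
      have hfun : ψ = fun q => u q • (1 : ℂ) + v q • Complex.I := by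
        funext q
        simp [hψ_def, Complex.real_smul]
      rw [hfun]
      exact h
    -- compose with the identification ℂ ≃ ℝ × ℝ
    set E : ℂ →L[ℝ] ℝ × ℝ := Complex.equivRealProdCLM.toContinuousLinearMap with hE
    have hEz : E z = p := rfl
    have hcomp : HasFDerivAt (fun w : ℂ => ψ (w.re, w.im)) (L.comp E) z := by
      have h : HasFDerivAt (ψ ∘ ⇑E) (L.comp E) z := HasFDerivAt.comp z hψ' E.hasFDerivAt
      exact h
    set M : ℂ →L[ℝ] ℂ := L.comp E with hM
    set a : ℝ := A (1, 0) with ha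
    set b : ℝ := B (1, 0) with hb
    set c : ℂ := (a : ℂ) + (b : ℂ) * Complex.I with hc
    have hMw : ∀ w : ℂ, M w = c * w := by
      intro w
      have h1 : ((w.re : ℝ), (w.im : ℝ)) = w.re • ((1 : ℝ), (0 : ℝ)) + w.im • ((0 : ℝ), (1 : ℝ)) := by
        simp
      have h2 : M w = A (w.re, w.im) • (1 : ℂ) + B (w.re, w.im) • Complex.I := by
        simp [hM, hL, hE]
      rw [h2, h1, map_add, map_add, map_smul, map_smul, map_smul, map_smul, hCR1, hCR2]
      rw [← ha, ← hb]
      simp only [hc, smul_eq_mul, Complex.real_smul]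
      apply Complex.ext <;>
        simp [Complex.add_re, Complex.add_im, Complex.mul_re, Complex.mul_im] <;> ring
    set N : ℂ →L[ℂ] ℂ := c • ContinuousLinearMap.id ℂ ℂ with hN
    have hMN : N.restrictScalars ℝ = M := by
      apply ContinuousLinearMap.ext
      intro w
      rw [hMw w]
      simp [hN, smul_eq_mul]
    have hCfd : HasFDerivAt (fun w : ℂ => ψ (w.re, w.im)) N z := by
      have hR : HasFDerivAt (fun w : ℂ => ψ (w.re, w.im)) (N.restrictScalars ℝ) z := by
        rw [hMN]; exact hcomp
      rw [hasFDerivAt_iff_isLittleO_nhds_zero] at hR ⊢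
      simpa using hR
    exact hCfd.differentiableAt
  · -- the curvature identity
    intro x y
    have hre : ((x : ℂ) + (y : ℂ) * Complex.I).re = x := by simp
    have him : ((x : ℂ) + (y : ℂ) * Complex.I).im = y := by simp
    have eφ : (fun z : ℂ => ψ (z.re, z.im)) ((x : ℂ) + (y : ℂ) * Complex.I) = ψ (x, y) := by
      rw [show (fun z : ℂ => ψ (z.re, z.im)) ((x : ℂ) + (y : ℂ) * Complex.I)
          = ψ (((x : ℂ) + (y : ℂ) * Complex.I).re, ((x : ℂ) + (y : ℂ) * Complex.I).im) from rfl,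
        hre, him]
    rw [eφ]
    have habs : ‖ψ (x, y)‖ ^ 2 = u (x, y) ^ 2 + v (x, y) ^ 2 := by
      rw [hψ_def]
      rw [Complex.sq_norm, Complex.normSq_add_mul_I]
    rw [habs]
    have h2 : u (x, y) = fxx f x y - H := by rw [hu_def, hfxx x y]
    have h3 : v (x, y) = -(fxy f x y) := by rw [hv_def, hfxy x y]
    have h1 : fyy f x y = 2 * H - fxx f x y := by linarith [hH x y]
    unfold Kgauss
    rw [h1, h2, h3]
    ring
end

section
/- Fix H ∈ ℝ and define f : ℝ² → ℝ by f(x,y) = H·(x² + y²)/2 + eˣ·cos y. Then f_xx + f_yy = 2H at every point, the Gaussian curvature satisfies K_f(x,y) = f_xx f_yy − f_xy² = H² − e^{2x} for all (x,y), so K_f(x,y) < H² everywhere (the graph has no umbilic points), and the image of K_f is exactly the open interval (−∞, H²). -/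
section aux

variable (H : ℝ)

lemma aux_pdx (f : ℝ → ℝ → ℝ)
    (hfdef : ∀ x y : ℝ,
      f x y = H * (x ^ 2 + y ^ 2) / 2 + Real.exp x * Real.cos y) (x y : ℝ) :
    pdx f x y = H * x + Real.exp x * Real.cos y := by
  unfold pdx
  have hfun : (fun t => f t y) = fun t => H * (t ^ 2 + y ^ 2) / 2 + Real.exp t * Real.cos y := by
    funext t; exact hfdef t y
  rw [hfun]
  have h : HasDerivAt (fun t => H * (t ^ 2 + y ^ 2) / 2 + Real.exp t * Real.cos y)
      (H * (2 * x) / 2 + Real.exp x * Real.cos y) x := by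
    have h1 : HasDerivAt (fun t : ℝ => t ^ 2) (2 * x) x := by
      simpa using hasDerivAt_pow 2 x
    exact (((h1.add_const (y ^ 2)).const_mul H).div_const 2).add
      ((Real.hasDerivAt_exp x).mul_const (Real.cos y))
  rw [h.deriv]; ring

lemma aux_pdy (f : ℝ → ℝ → ℝ)
    (hfdef : ∀ x y : ℝ,
      f x y = H * (x ^ 2 + y ^ 2) / 2 + Real.exp x * Real.cos y) (x y : ℝ) :
    pdy f x y = H * y - Real.exp x * Real.sin y := by
  unfold pdy
  have hfun : (fun t => f x t) = fun t => H * (x ^ 2 + t ^ 2) / 2 + Real.exp x * Real.cos t := by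
    funext t; exact hfdef x t
  rw [hfun]
  have h : HasDerivAt (fun t => H * (x ^ 2 + t ^ 2) / 2 + Real.exp x * Real.cos t)
      (H * (2 * y) / 2 + Real.exp x * (-Real.sin y)) y := by
    have h1 : HasDerivAt (fun t : ℝ => t ^ 2) (2 * y) y := by
      simpa using hasDerivAt_pow 2 y
    exact (((h1.const_add (x ^ 2)).const_mul H).div_const 2).add
      ((Real.hasDerivAt_cos y).const_mul (Real.exp x))
  rw [h.deriv]; ring

lemma aux_fxx (f : ℝ → ℝ → ℝ)
    (hfdef : ∀ x y : ℝ,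
      f x y = H * (x ^ 2 + y ^ 2) / 2 + Real.exp x * Real.cos y) (x y : ℝ) :
    fxx f x y = H + Real.exp x * Real.cos y := by
  have hdef : fxx f x y = deriv (fun t => pdx f t y) x := rfl
  rw [hdef]
  have hfun : (fun t => pdx f t y) = fun t => H * t + Real.exp t * Real.cos y := by
    funext t; exact aux_pdx H f hfdef t y
  rw [hfun]
  have h : HasDerivAt (fun t => H * t + Real.exp t * Real.cos y)
      (H * 1 + Real.exp x * Real.cos y) x :=
    ((hasDerivAt_id x).const_mul H).add ((Real.hasDerivAt_exp x).mul_const (Real.cos y))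
  rw [h.deriv]; ring

lemma aux_fxy (f : ℝ → ℝ → ℝ)
    (hfdef : ∀ x y : ℝ,
      f x y = H * (x ^ 2 + y ^ 2) / 2 + Real.exp x * Real.cos y) (x y : ℝ) :
    fxy f x y = -(Real.exp x * Real.sin y) := by
  unfold fxy pdy
  have hfun : (fun t => pdx f x t) = fun t => H * x + Real.exp x * Real.cos t := by
    funext t; exact aux_pdx H f hfdef x t
  rw [hfun]
  have h : HasDerivAt (fun t => H * x + Real.exp x * Real.cos t)
      (Real.exp x * (-Real.sin y)) y :=
    ((Real.hasDerivAt_cos y).const_mul (Real.exp x)).const_add (H * x)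
  rw [h.deriv]; ring

lemma aux_fyy (f : ℝ → ℝ → ℝ)
    (hfdef : ∀ x y : ℝ,
      f x y = H * (x ^ 2 + y ^ 2) / 2 + Real.exp x * Real.cos y) (x y : ℝ) :
    fyy f x y = H - Real.exp x * Real.cos y := by
  have hdef : fyy f x y = deriv (fun t => pdy f x t) y := rfl
  rw [hdef]
  have hfun : (fun t => pdy f x t) = fun t => H * t - Real.exp x * Real.sin t := by
    funext t; exact aux_pdy H f hfdef x t
  rw [hfun]
  have h : HasDerivAt (fun t => H * t - Real.exp x * Real.sin t)
      (H * 1 - Real.exp x * Real.cos y) y :=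
    ((hasDerivAt_id y).const_mul H).sub ((Real.hasDerivAt_sin y).const_mul (Real.exp x))
  rw [h.deriv]; ring

end aux

theorem stmt_10 (H : ℝ) (f : ℝ → ℝ → ℝ)
    (hfdef : ∀ x y : ℝ,
      f x y = H * (x ^ 2 + y ^ 2) / 2 + Real.exp x * Real.cos y) :
    (∀ x y : ℝ, fxx f x y + fyy f x y = 2 * H) ∧
    (∀ x y : ℝ, Kgauss f x y = H ^ 2 - Real.exp (2 * x)) ∧
    (∀ x y : ℝ, Kgauss f x y < H ^ 2) ∧
    Set.range (fun p : ℝ × ℝ => Kgauss f p.1 p.2) = Set.Iio (H ^ 2) := by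
  have hK : ∀ x y : ℝ, Kgauss f x y = H ^ 2 - Real.exp (2 * x) := by
    intro x y
    unfold Kgauss
    rw [aux_fxx H f hfdef, aux_fyy H f hfdef, aux_fxy H f hfdef]
    have : Real.exp (2 * x) = Real.exp x * Real.exp x := by
      rw [two_mul, Real.exp_add]
    rw [this]
    have hx := Real.sin_sq_add_cos_sq y
    nlinarith [hx]
  refine ⟨?_, hK, ?_, ?_⟩
  · intro x y
    rw [aux_fxx H f hfdef, aux_fyy H f hfdef]; ring
  · intro x y
    rw [hK x y]
    have := Real.exp_pos (2 * x)
    linarith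
  · ext z
    simp only [Set.mem_range, Set.mem_Iio, Prod.exists]
    constructor
    · rintro ⟨x, y, rfl⟩
      rw [hK x y]
      have := Real.exp_pos (2 * x)
      linarith
    · intro hz
      refine ⟨Real.log (H ^ 2 - z) / 2, 0, ?_⟩
      rw [hK]
      have h1 : (0:ℝ) < H ^ 2 - z := by linarith
      rw [show 2 * (Real.log (H ^ 2 - z) / 2) = Real.log (H ^ 2 - z) by ring,
        Real.exp_log h1]
      ring
end
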